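/- arXiv:1711.01811 — 7 statements merged into one kernel-verified Lean document; each statement's English description precedes it below -/
import Mathlib

section
/- Let P be a finite set of points in the plane ℝ² that is not contained in a single line. Then for every pair of distinct points p, q ∈ P that are not visible to each other (i.e., some point of P lies in the open segment between p and q), there exists a point r ∈ P with r ≠ p and r ≠ q such that r is visible to p and r is visible to q. -/
/-!
Let `f` be an affine functional vanishing on the line `pq`; since `P` is not collinear, some
point of `P` has `f ≠ 0`. Take `r ∈ P` with `|f r|` minimal and positive. Along the segment from
`r` to a point `w` of the line, `|f|` decreases linearly from `|f r|` to `0`, so no point of `P`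
lies strictly between them: `r` sees every point of `P` on the line, in particular `p` and `q`.
-/

/-- Two points `p q` are visible to each other with respect to the point set `P`
if they are distinct and no point of `P` lies in the open segment between them. -/
def Visible (P : Finset (ℝ × ℝ)) (p q : ℝ × ℝ) : Prop :=
  p ≠ q ∧ ∀ r ∈ P, r ∉ openSegment ℝ p q

open Set

section AffineFunctional

variable {E : Type*} [AddCommGroup E] [Module ℝ E]

lemma AffineMap.exists_apply_eq_mul_of_mem_openSegment (f : E →ᵃ[ℝ] ℝ) {r w s : E}
    (hw : f w = 0) (hs : s ∈ openSegment ℝ r w) : ∃ a ∈ Ioo (0 : ℝ) 1, f s = a * f r := by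
  rw [openSegment_eq_image_lineMap] at hs
  obtain ⟨t, ⟨ht₀, ht₁⟩, rfl⟩ := hs
  refine ⟨1 - t, ⟨by linarith, by linarith⟩, ?_⟩
  rw [AffineMap.apply_lineMap, hw, AffineMap.lineMap_apply_ring]
  ring

lemma AffineMap.notMem_openSegment_of_abs_le (f : E →ᵃ[ℝ] ℝ) {S : Set E} {r w : E}
    (hr : f r ≠ 0) (hmin : ∀ s ∈ S, f s ≠ 0 → |f r| ≤ |f s|) (hw : f w = 0) :
    ∀ s ∈ S, s ∉ openSegment ℝ r w := by
  intro s hs hseg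
  obtain ⟨a, ⟨ha₀, ha₁⟩, hfs⟩ := f.exists_apply_eq_mul_of_mem_openSegment hw hseg
  have hle := hmin s hs (by rw [hfs]; exact mul_ne_zero ha₀.ne' hr)
  rw [hfs, abs_mul, abs_of_pos ha₀] at hle
  nlinarith [abs_pos.mpr hr]

theorem AffineMap.exists_mem_forall_notMem_openSegment (f : E →ᵃ[ℝ] ℝ) (P : Finset E)
    (h : ∃ x ∈ P, f x ≠ 0) :
    ∃ r ∈ P, f r ≠ 0 ∧ ∀ w, f w = 0 → ∀ s ∈ P, s ∉ openSegment ℝ r w := by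
  classical
  obtain ⟨x, hxP, hx⟩ := h
  obtain ⟨r, hr, hmin⟩ := (P.filter fun x => f x ≠ 0).exists_min_image (fun x => |f x|)
    ⟨x, Finset.mem_filter.mpr ⟨hxP, hx⟩⟩
  rw [Finset.mem_filter] at hr
  refine ⟨r, hr.1, hr.2, fun w hw => f.notMem_openSegment_of_abs_le hr.2 ?_ hw⟩
  exact fun s hs hfs => hmin s (Finset.mem_filter.mpr ⟨hs, hfs⟩)

end AffineFunctional

section PlaneLine

/-- The affine functional `x ↦ det (q - p, x - p)`, whose zero set is the line `pq`. -/
def lineEquation (p q : ℝ × ℝ) : ℝ × ℝ →ᵃ[ℝ] ℝ where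
  toFun x := (q.1 - p.1) * (x.2 - p.2) - (q.2 - p.2) * (x.1 - p.1)
  linear := (q.1 - p.1) • LinearMap.snd ℝ ℝ ℝ - (q.2 - p.2) • LinearMap.fst ℝ ℝ ℝ
  map_vadd' x v := by
    simp only [vadd_eq_add, Prod.snd_add, Prod.fst_add, LinearMap.sub_apply, LinearMap.smul_apply,
      LinearMap.snd_apply, smul_eq_mul, LinearMap.fst_apply]
    ring

variable (p q : ℝ × ℝ)

@[simp]
lemma lineEquation_apply (x : ℝ × ℝ) :
    lineEquation p q x = (q.1 - p.1) * (x.2 - p.2) - (q.2 - p.2) * (x.1 - p.1) := rfl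

lemma lineEquation_left : lineEquation p q p = 0 := by simp

lemma lineEquation_right : lineEquation p q q = 0 := by
  rw [lineEquation_apply]
  ring

variable {p q}

lemma exists_eq_smul_vadd_of_lineEquation_eq_zero (hpq : p ≠ q) {x : ℝ × ℝ}
    (hx : lineEquation p q x = 0) : ∃ t : ℝ, x = t • (q - p) +ᵥ p := by
  rw [lineEquation_apply] at hx
  have hnorm : (q.1 - p.1) ^ 2 + (q.2 - p.2) ^ 2 ≠ 0 := by
    intro h0
    apply hpq
    ext <;> nlinarith [sq_nonneg (q.1 - p.1), sq_nonneg (q.2 - p.2)]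
  -- `t` is the orthogonal projection coefficient of `x - p` on `q - p`
  refine ⟨((q.1 - p.1) * (x.1 - p.1) + (q.2 - p.2) * (x.2 - p.2)) /
    ((q.1 - p.1) ^ 2 + (q.2 - p.2) ^ 2), ?_⟩
  ext <;> simp only [vadd_eq_add, Prod.fst_add, Prod.snd_add, Prod.smul_fst, Prod.smul_snd,
    Prod.fst_sub, Prod.snd_sub, smul_eq_mul] <;> field_simp
  · linear_combination -(q.2 - p.2) * hx
  · linear_combination (q.1 - p.1) * hx

lemma collinear_of_forall_lineEquation_eq_zero (hpq : p ≠ q) {S : Set (ℝ × ℝ)}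
    (h : ∀ x ∈ S, lineEquation p q x = 0) : Collinear ℝ S :=
  (collinear_iff_exists_forall_eq_smul_vadd S).mpr
    ⟨p, q - p, fun x hx => exists_eq_smul_vadd_of_lineEquation_eq_zero hpq (h x hx)⟩

end PlaneLine

theorem stmt_0_general (P : Finset (ℝ × ℝ)) (hcol : ¬ Collinear ℝ (P : Set (ℝ × ℝ)))
    (p q : ℝ × ℝ) (hpq : p ≠ q) :
    ∃ r ∈ P, r ≠ p ∧ r ≠ q ∧ Visible P r p ∧ Visible P r q := by
  have hoff : ∃ x ∈ P, lineEquation p q x ≠ 0 := by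
    by_contra! h
    exact hcol (collinear_of_forall_lineEquation_eq_zero hpq h)
  obtain ⟨r, hrP, hr, hsees⟩ := (lineEquation p q).exists_mem_forall_notMem_openSegment P hoff
  have hrp : r ≠ p := by rintro rfl; exact hr (lineEquation_left r q)
  have hrq : r ≠ q := by rintro rfl; exact hr (lineEquation_right p r)
  exact ⟨r, hrP, hrp, hrq, ⟨hrp, hsees p (lineEquation_left p q)⟩,
    ⟨hrq, hsees q (lineEquation_right p q)⟩⟩

theorem stmt_0 (P : Finset (ℝ × ℝ)) (hcol : ¬ Collinear ℝ (P : Set (ℝ × ℝ)))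
    (p q : ℝ × ℝ) (hp : p ∈ P) (hq : q ∈ P) (hpq : p ≠ q)
    (hnotvis : ∃ r ∈ P, r ∈ openSegment ℝ p q) :
    ∃ r ∈ P, r ≠ p ∧ r ≠ q ∧ Visible P r p ∧ Visible P r q :=
  stmt_0_general P hcol p q hpq
end

section
/- Let P be a finite set of at least three points in the plane ℝ² that is not contained in a single line. Then the point visibility graph of P contains a Hamiltonian cycle. -/
/-- The point visibility graph of a finite point set `P` in the plane. -/
def PVG (P : Finset (ℝ × ℝ)) : SimpleGraph {x : ℝ × ℝ // x ∈ P} where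
  Adj u v := Visible P u.1 v.1
  symm := by
    constructor
    rintro u v ⟨hne, h⟩
    exact ⟨hne.symm, fun r hr hmem => h r hr (by rwa [openSegment_symm] at hmem)⟩
  loopless := by constructor; rintro u ⟨hne, -⟩; exact hne rfl

/-!
Let `p` be the lexicographically smallest point of `P`, so that every other point `q` satisfies
`0 < toLex (q - p)`. Sort the other points by the angle of `q - p`, outwards along each ray from
`p` except along the last ray, which is traversed inwards. Then `p, a₁, …, aₙ, p` is a star-shaped
polygon through all the points: a point of `P` strictly inside the segment between two consecutive
vertices would lie strictly between them in the sweep order, and since `P` is not collinear the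
first ray differs from the last one, so `p` sees both `a₁` and `aₙ`.
-/

theorem List.Pairwise.isChain_between {α : Type*} {R : α → α → Prop} :
    ∀ {l : List α}, l.Pairwise R →
      l.IsChain (fun x y => R x y ∧ ∀ z ∈ l, z = x ∨ z = y ∨ R z x ∨ R y z)
  | [], _ => .nil
  | [_], _ => .singleton _
  | a :: b :: t, h => by
    have hab := List.pairwise_cons.mp h
    have hb := List.pairwise_cons.mp hab.2
    refine .cons_cons ⟨hab.1 b (by simp), ?_⟩ ?_
    · intro z hz
      rcases List.mem_cons.mp hz with rfl | hz
      · exact .inl rfl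
      rcases List.mem_cons.mp hz with rfl | hz
      · exact .inr (.inl rfl)
      · exact .inr (.inr (.inr (hb.1 z hz)))
    · refine (isChain_between hab.2).imp_of_mem_imp fun x y hx _ ⟨hxy, hbetween⟩ => ⟨hxy, ?_⟩
      intro z hz
      rcases List.mem_cons.mp hz with rfl | hz
      · exact .inr (.inr (.inl (hab.1 x hx)))
      · exact hbetween z hz

theorem Finset.exists_nodup_pairwise {α : Type*} (s : Finset α) (r : α → α → Prop)
    (htrans : ∀ a ∈ s, ∀ b ∈ s, ∀ c ∈ s, r a b → r b c → r a c)
    (htotal : ∀ a ∈ s, ∀ b ∈ s, r a b ∨ r b a) :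
    ∃ l : List α, l.Nodup ∧ (∀ a, a ∈ l ↔ a ∈ s) ∧ l.Pairwise r := by
  classical
  let l := s.attach.toList.mergeSort fun a b : s => decide (r a b)
  have hperm : l.Perm s.attach.toList := List.mergeSort_perm _ _
  have hsorted : l.Pairwise fun a b : s => decide (r a b) :=
    List.pairwise_mergeSort
      (fun a b c hab hbc => by
        simp only [decide_eq_true_eq] at *
        exact htrans a a.2 b b.2 c c.2 hab hbc)
      (fun a b => by simpa using htotal a a.2 b b.2) _
  refine ⟨l.map Subtype.val, ?_, ?_, ?_⟩
  · exact (hperm.nodup_iff.mpr s.attach.nodup_toList).map Subtype.val_injective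
  · intro a
    simp [hperm.mem_iff]
  · exact List.pairwise_map.mpr (hsorted.imp fun h => by simpa using h)

theorem SimpleGraph.exists_isHamiltonianCycle_of_isChain {V : Type*} [DecidableEq V]
    {G : SimpleGraph V} {a : V} {l : List V} (hnd : (a :: l).Nodup) (hall : ∀ v, v ∈ a :: l)
    (hlen : 2 ≤ l.length) (hchain : (a :: l ++ [a]).IsChain G.Adj) :
    ∃ (v : V) (c : G.Walk v v), c.IsHamiltonianCycle := by
  obtain ⟨c, hc⟩ : ∃ c : G.Walk a a, c.support = a :: l ++ [a] :=
    ⟨(Walk.ofSupport (a :: l ++ [a]) (List.cons_ne_nil _ _) hchain).copy rfl (by simp),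
      (Walk.support_copy _ _ _).trans (Walk.support_ofSupport _ _)⟩
  have hlength : c.length = l.length + 1 := by
    have := c.length_support
    simp only [hc, List.length_cons, List.length_append, List.length_nil] at this
    omega
  have hsupp : c.support.tail = l ++ [a] := by rw [hc]; rfl
  have hnd' : (l ++ [a]).Nodup := List.nodup_append_comm.mp (by simpa using hnd)
  refine ⟨a, c, Walk.isHamiltonianCycle_iff_isCycle_and_support_count_tail_eq_one.mpr ⟨?_, ?_⟩⟩
  · refine Walk.isCycle_iff_isPath_tail_and_le_length.mpr ⟨?_, by omega⟩
    rw [Walk.isPath_def, Walk.support_tail_of_not_nil _ (Walk.not_nil_iff_lt_length.mpr (by omega)),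
      hsupp]
    exact hnd'
  · intro v
    rw [hsupp]
    exact List.count_eq_one_of_mem hnd' (by simpa [or_comm] using hall v)

theorem sub_mem_openSegment_sub {E : Type*} [AddCommGroup E] [Module ℝ E] {x y r : E} (p : E)
    (h : r ∈ openSegment ℝ x y) : r - p ∈ openSegment ℝ (x - p) (y - p) := by
  simpa only [neg_add_eq_sub] using (mem_openSegment_translate ℝ (-p)).mpr h

theorem exists_smul_of_mem_openSegment_zero_left {E : Type*} [AddCommGroup E] [Module ℝ E]
    {v r : E} (h : r ∈ openSegment ℝ 0 v) : ∃ θ : ℝ, 0 < θ ∧ θ < 1 ∧ r = θ • v := by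
  rw [openSegment_eq_image] at h
  obtain ⟨θ, ⟨h0, h1⟩, rfl⟩ := h
  exact ⟨θ, h0, h1, by simp⟩

namespace PointVisibility

def cross (u v : ℝ × ℝ) : ℝ := u.1 * v.2 - u.2 * v.1

@[simp] lemma cross_self (u : ℝ × ℝ) : cross u u = 0 := by simp [cross, mul_comm]

@[simp] lemma cross_smul_left (t : ℝ) (u v : ℝ × ℝ) : cross (t • u) v = t * cross u v := by
  simp only [cross, Prod.smul_fst, Prod.smul_snd, smul_eq_mul]; ring

@[simp] lemma cross_smul_right (t : ℝ) (u v : ℝ × ℝ) : cross u (t • v) = t * cross u v := by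
  simp only [cross, Prod.smul_fst, Prod.smul_snd, smul_eq_mul]; ring

lemma cross_anticomm (u v : ℝ × ℝ) : cross v u = -cross u v := by simp only [cross]; ring

lemma cross_smul_add_cross_smul (u v w : ℝ × ℝ) :
    cross u v • w + cross v w • u = cross u w • v := by
  ext <;> simp only [cross, Prod.fst_add, Prod.snd_add, Prod.smul_fst, Prod.smul_snd,
    smul_eq_mul] <;> ring

lemma exists_smul_eq_of_cross_eq_zero {u v : ℝ × ℝ} (hu : u ≠ 0) (h : cross u v = 0) :
    ∃ t : ℝ, v = t • u := by
  have hn : 0 < u.1 ^ 2 + u.2 ^ 2 := by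
    obtain h | h : u.1 ≠ 0 ∨ u.2 ≠ 0 := by
      by_contra! h
      exact hu (Prod.ext h.1 h.2)
    all_goals positivity
  simp only [cross] at h
  refine ⟨(u.1 * v.1 + u.2 * v.2) / (u.1 ^ 2 + u.2 ^ 2), Prod.ext ?_ ?_⟩ <;>
    simp only [Prod.smul_fst, Prod.smul_snd, smul_eq_mul] <;> field_simp
  · linear_combination (-u.2) * h
  · linear_combination u.1 * h

lemma toLex_pos_iff {v : ℝ × ℝ} : 0 < toLex v ↔ 0 < v.1 ∨ v.1 = 0 ∧ 0 < v.2 := by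
  rw [← toLex_zero, Prod.Lex.toLex_lt_toLex]; simp [eq_comm]

lemma toLex_smul_pos {t : ℝ} {v : ℝ × ℝ} (ht : 0 < t) (hv : 0 < toLex v) :
    0 < toLex (t • v) := by
  rw [toLex_pos_iff] at hv ⊢
  simp only [Prod.smul_fst, Prod.smul_snd, smul_eq_mul]
  rcases hv with h | ⟨h1, h2⟩
  · exact .inl (mul_pos ht h)
  · exact .inr ⟨by simp [h1], mul_pos ht h2⟩

lemma toLex_smul_nonneg {t : ℝ} {v : ℝ × ℝ} (ht : 0 ≤ t) (hv : 0 < toLex v) :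
    0 ≤ toLex (t • v) := by
  rcases ht.eq_or_lt with rfl | ht
  · simp
  · exact (toLex_smul_pos ht hv).le

lemma toLex_smul_nonpos {t : ℝ} {v : ℝ × ℝ} (ht : t ≤ 0) (hv : 0 < toLex v) :
    toLex (t • v) ≤ 0 := by
  have := toLex_smul_nonneg (neg_nonneg.mpr ht) hv
  rwa [neg_smul, toLex_neg, neg_nonneg] at this

lemma toLex_smul_lt_self {θ : ℝ} {v : ℝ × ℝ} (hθ : θ < 1) (hv : 0 < toLex v) :
    toLex (θ • v) < toLex v := by
  rw [← sub_pos, ← toLex_sub, show v - θ • v = (1 - θ) • v by rw [sub_smul, one_smul]]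
  exact toLex_smul_pos (sub_pos.mpr hθ) hv

lemma exists_pos_smul_eq_of_cross_eq_zero {u v : ℝ × ℝ} (hu : 0 < toLex u) (hv : 0 < toLex v)
    (h : cross u v = 0) : ∃ t : ℝ, 0 < t ∧ v = t • u := by
  obtain ⟨t, rfl⟩ := exists_smul_eq_of_cross_eq_zero (by rintro rfl; exact hu.ne rfl) h
  refine ⟨t, lt_of_not_ge fun ht => ?_, rfl⟩
  exact (toLex_smul_nonpos ht hu).not_gt hv

lemma toLex_lt_of_mem_openSegment {u v m : ℝ × ℝ} (huv : toLex u < toLex v)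
    (hm : m ∈ openSegment ℝ u v) : toLex u < toLex m ∧ toLex m < toLex v := by
  obtain ⟨a, b, ha, hb, hab, rfl⟩ := hm
  rw [← sub_pos, ← toLex_sub] at huv
  rw [← sub_pos, ← toLex_sub, ← sub_pos (a := toLex v), ← toLex_sub]
  obtain rfl : a = 1 - b := by linarith
  constructor
  · convert toLex_smul_pos hb huv using 2; module
  · convert toLex_smul_pos ha huv using 2; module

lemma toLex_pos_of_mem_openSegment {u v m : ℝ × ℝ} (hu : 0 < toLex u) (hv : 0 < toLex v)
    (hm : m ∈ openSegment ℝ u v) : 0 < toLex m := by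
  obtain ⟨a, b, ha, hb, -, rfl⟩ := hm
  rw [toLex_add]
  exact add_pos (toLex_smul_pos ha hu) (toLex_smul_pos hb hv)

lemma cross_pos_of_nonneg {u v w : ℝ × ℝ} (hu : 0 < toLex u) (hv : 0 < toLex v)
    (hw : 0 < toLex w) (huv : 0 ≤ cross u v) (hvw : 0 ≤ cross v w)
    (h : 0 < cross u v ∨ 0 < cross v w) : 0 < cross u w := by
  have hsum : 0 < toLex (cross u v • w + cross v w • u) := by
    rw [toLex_add]
    rcases h with h | h
    · exact add_pos_of_pos_of_nonneg (toLex_smul_pos h hw) (toLex_smul_nonneg hvw hu)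
    · exact add_pos_of_nonneg_of_pos (toLex_smul_nonneg huv hw) (toLex_smul_pos h hu)
  rw [cross_smul_add_cross_smul] at hsum
  exact lt_of_not_ge fun hle => (toLex_smul_nonpos hle hv).not_gt hsum

def IsMaxDir (Q : Set (ℝ × ℝ)) (u : ℝ × ℝ) : Prop := ∀ q ∈ Q, 0 ≤ cross q u

lemma isMaxDir_smul_iff {Q : Set (ℝ × ℝ)} {t : ℝ} (ht : 0 < t) (u : ℝ × ℝ) :
    IsMaxDir Q (t • u) ↔ IsMaxDir Q u := by
  simp only [IsMaxDir, cross_smul_right, mul_nonneg_iff_of_pos_left ht]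

/-- The angular sweep order around the origin on the half-plane `0 < toLex u`. Vectors on a
common ray are ordered outwards, except on the last ray (directions `IsMaxDir Q`), where they
are ordered inwards, so that the sweep returns to the origin along that ray. -/
def SweepLE (Q : Set (ℝ × ℝ)) (u v : ℝ × ℝ) : Prop :=
  0 < cross u v ∨ cross u v = 0 ∧
    (IsMaxDir Q u ∧ toLex v ≤ toLex u ∨ ¬IsMaxDir Q u ∧ toLex u ≤ toLex v)

section SweepLE

variable {Q : Set (ℝ × ℝ)} {u v w : ℝ × ℝ}

lemma SweepLE.cross_nonneg (h : SweepLE Q u v) : 0 ≤ cross u v := by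
  rcases h with h | ⟨h, -⟩
  exacts [h.le, h.ge]

lemma isMaxDir_iff_of_cross_eq_zero (hu : 0 < toLex u) (hv : 0 < toLex v) (h : cross u v = 0) :
    IsMaxDir Q v ↔ IsMaxDir Q u := by
  obtain ⟨t, ht, rfl⟩ := exists_pos_smul_eq_of_cross_eq_zero hu hv h
  exact isMaxDir_smul_iff ht u

lemma sweepLE_total (hu : 0 < toLex u) (hv : 0 < toLex v) : SweepLE Q u v ∨ SweepLE Q v u := by
  rcases lt_trichotomy (cross u v) 0 with h | h | h
  · exact .inr (.inl (by rw [cross_anticomm]; linarith))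
  · have hvu : cross v u = 0 := by rw [cross_anticomm, h, neg_zero]
    have hmax := isMaxDir_iff_of_cross_eq_zero (Q := Q) hu hv h
    by_cases hu' : IsMaxDir Q u <;> rcases le_total (toLex u) (toLex v) with huv | huv
    · exact .inr (.inr ⟨hvu, .inl ⟨hmax.mpr hu', huv⟩⟩)
    · exact .inl (.inr ⟨h, .inl ⟨hu', huv⟩⟩)
    · exact .inl (.inr ⟨h, .inr ⟨hu', huv⟩⟩)
    · exact .inr (.inr ⟨hvu, .inr ⟨mt hmax.mp hu', huv⟩⟩)
  · exact .inl (.inl h)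

lemma sweepLE_trans (hu : 0 < toLex u) (hv : 0 < toLex v) (hw : 0 < toLex w)
    (huv : SweepLE Q u v) (hvw : SweepLE Q v w) : SweepLE Q u w := by
  by_cases h : 0 < cross u v ∨ 0 < cross v w
  · exact .inl (cross_pos_of_nonneg hu hv hw huv.cross_nonneg hvw.cross_nonneg h)
  push Not at h
  have huv0 := le_antisymm h.1 huv.cross_nonneg
  have hvw0 := le_antisymm h.2 hvw.cross_nonneg
  obtain ⟨s, hs, rfl⟩ := exists_pos_smul_eq_of_cross_eq_zero hu hv huv0
  obtain ⟨t, ht, rfl⟩ := exists_pos_smul_eq_of_cross_eq_zero hv hw hvw0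
  refine .inr ⟨by simp, ?_⟩
  rcases huv with h' | ⟨-, huv⟩
  · exact absurd h' (by simp)
  rcases hvw with h' | ⟨-, hvw⟩
  · exact absurd h' (by simp)
  rw [isMaxDir_smul_iff hs] at hvw
  rcases huv with ⟨hmax, huv⟩ | ⟨hmax, huv⟩ <;> rcases hvw with ⟨hmax', hvw⟩ | ⟨hmax', hvw⟩
  · exact .inl ⟨hmax, hvw.trans huv⟩
  · exact absurd hmax hmax'
  · exact absurd hmax' hmax
  · exact .inr ⟨hmax, huv.trans hvw⟩

lemma not_sweepLE_of_mem_openSegment {m : ℝ × ℝ} (hu : 0 < toLex u) (hv : 0 < toLex v)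
    (hne : u ≠ v) (huv : SweepLE Q u v) (hm : m ∈ openSegment ℝ u v) :
    ¬SweepLE Q m u ∧ ¬SweepLE Q v m := by
  obtain ⟨a, b, ha, hb, hab, rfl⟩ := hm
  have hmu : cross (a • u + b • v) u = -(b * cross u v) := by
    simp only [cross, Prod.fst_add, Prod.snd_add, Prod.smul_fst, Prod.smul_snd, smul_eq_mul]; ring
  have hvm : cross v (a • u + b • v) = -(a * cross u v) := by
    simp only [cross, Prod.fst_add, Prod.snd_add, Prod.smul_fst, Prod.smul_snd, smul_eq_mul]; ring
  rcases huv with hpos | ⟨h0, htie⟩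
  · constructor <;> intro h <;> have := h.cross_nonneg
    · rw [hmu] at this; nlinarith
    · rw [hvm] at this; nlinarith
  rw [h0, mul_zero, neg_zero] at hmu hvm
  obtain ⟨s, hs, rfl⟩ := exists_pos_smul_eq_of_cross_eq_zero hu hv h0
  have hseg : a • u + b • (s • u) ∈ openSegment ℝ u (s • u) := ⟨a, b, ha, hb, hab, rfl⟩
  have hmax : IsMaxDir Q (a • u + b • (s • u)) ↔ IsMaxDir Q u := by
    rw [smul_smul, ← add_smul, isMaxDir_smul_iff (by positivity)]
  simp only [SweepLE, hmu, hvm, hmax, isMaxDir_smul_iff hs, lt_irrefl, true_and, false_or]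
  rcases htie with ⟨hmaxu, hle⟩ | ⟨hmaxu, hle⟩
  · rw [openSegment_symm] at hseg
    obtain ⟨h1, h2⟩ := toLex_lt_of_mem_openSegment
      (hle.lt_of_ne fun h => hne (toLex.injective h).symm) hseg
    simp only [hmaxu, true_and, not_true_eq_false, false_and, or_false]
    exact ⟨h2.not_ge, h1.not_ge⟩
  · obtain ⟨h1, h2⟩ := toLex_lt_of_mem_openSegment
      (hle.lt_of_ne fun h => hne (toLex.injective h)) hseg
    simp only [hmaxu, false_and, not_false_eq_true, true_and, false_or]
    exact ⟨h1.not_ge, h2.not_ge⟩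

lemma isMaxDir_of_sweepLE_smul {θ : ℝ} (hu : 0 < toLex u) (hθ : θ < 1)
    (h : SweepLE Q u (θ • u)) : IsMaxDir Q u := by
  by_contra hmax
  rcases h with h | ⟨-, ⟨hmax', -⟩ | ⟨-, hle⟩⟩
  · simp at h
  · exact hmax hmax'
  · exact hle.not_gt (toLex_smul_lt_self hθ hu)

lemma not_isMaxDir_of_smul_sweepLE {θ : ℝ} (hu : 0 < toLex u) (hθ0 : 0 < θ) (hθ : θ < 1)
    (h : SweepLE Q (θ • u) u) : ¬IsMaxDir Q u := by
  intro hmax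
  rcases h with h | ⟨-, ⟨-, hle⟩ | ⟨hmax', -⟩⟩
  · simp at h
  · exact hle.not_gt (toLex_smul_lt_self hθ hu)
  · exact hmax' ((isMaxDir_smul_iff hθ0 u).mpr hmax)

end SweepLE

def SweepAround (P : Finset (ℝ × ℝ)) (p x y : ℝ × ℝ) : Prop :=
  SweepLE ((· - p) '' ↑P) (x - p) (y - p)

section SweepAround

variable {P : Finset (ℝ × ℝ)} {p : ℝ × ℝ}

lemma visible_of_sweepAround {x y : ℝ × ℝ} (hux : 0 < toLex (x - p)) (huy : 0 < toLex (y - p))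
    (hxy : x ≠ y) (hR : SweepAround P p x y)
    (hgap : ∀ z ∈ P, z ≠ p → z = x ∨ z = y ∨ SweepAround P p z x ∨ SweepAround P p y z) :
    Visible P x y := by
  refine ⟨hxy, fun r hr hseg => ?_⟩
  have hseg' := sub_mem_openSegment_sub p hseg
  have hrp : r ≠ p := by
    rintro rfl
    simpa using toLex_pos_of_mem_openSegment hux huy hseg'
  have hne : x - p ≠ y - p := fun h => hxy (sub_left_injective h)
  obtain ⟨hrx, hyr⟩ := not_sweepLE_of_mem_openSegment hux huy hne hR hseg'
  rcases hgap r hr hrp with rfl | rfl | h | h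
  · exact hxy (left_mem_openSegment_iff.mp hseg)
  · exact hxy (right_mem_openSegment_iff.mp hseg)
  · exact hrx h
  · exact hyr h

lemma visible_of_sweepAround_first {a : ℝ × ℝ} (hap : a ≠ p)
    (hua : 0 < toLex (a - p)) (hmax : ¬IsMaxDir ((· - p) '' ↑P) (a - p))
    (hfirst : ∀ z ∈ P, z ≠ p → z ≠ a → SweepAround P p a z) : Visible P p a := by
  refine ⟨hap.symm, fun r hr hseg => ?_⟩
  have hrp : r ≠ p := by rintro rfl; exact hap.symm (left_mem_openSegment_iff.mp hseg)
  have hra : r ≠ a := by rintro rfl; exact hap.symm (right_mem_openSegment_iff.mp hseg)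
  obtain ⟨θ, -, hθ1, hθ⟩ := exists_smul_of_mem_openSegment_zero_left
    (by simpa using sub_mem_openSegment_sub p hseg)
  have h := hfirst r hr hrp hra
  rw [SweepAround, hθ] at h
  exact hmax (isMaxDir_of_sweepLE_smul hua hθ1 h)

lemma visible_of_sweepAround_last {z : ℝ × ℝ} (hzp : z ≠ p)
    (huz : 0 < toLex (z - p)) (hlast : ∀ q ∈ P, q ≠ p → q ≠ z → SweepAround P p q z) :
    Visible P z p := by
  have hmax : IsMaxDir ((· - p) '' ↑P) (z - p) := by
    rintro _ ⟨q, hq, rfl⟩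
    by_cases hqp : q = p
    · simp [hqp, cross]
    by_cases hqz : q = z
    · simp [hqz]
    exact (hlast q hq hqp hqz).cross_nonneg
  refine ⟨hzp, fun r hr hseg => ?_⟩
  rw [openSegment_symm] at hseg
  have hrp : r ≠ p := by rintro rfl; exact hzp (left_mem_openSegment_iff.mp hseg).symm
  have hrz : r ≠ z := by rintro rfl; exact hzp (right_mem_openSegment_iff.mp hseg).symm
  obtain ⟨θ, hθ0, hθ1, hθ⟩ := exists_smul_of_mem_openSegment_zero_left
    (by simpa using sub_mem_openSegment_sub p hseg)
  have h := hlast r hr hrp hrz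
  rw [SweepAround, hθ] at h
  exact not_isMaxDir_of_smul_sweepLE huz hθ0 hθ1 h hmax

lemma not_isMaxDir_of_sweepAround_first (hcol : ¬Collinear ℝ (P : Set (ℝ × ℝ))) (hpP : p ∈ P)
    {a : ℝ × ℝ} (hua : 0 < toLex (a - p))
    (hfirst : ∀ z ∈ P, z ≠ p → z ≠ a → SweepAround P p a z) :
    ¬IsMaxDir ((· - p) '' ↑P) (a - p) := by
  intro hmax
  refine hcol ((collinear_iff_of_mem (Finset.mem_coe.mpr hpP)).mpr ⟨a - p, fun q hq => ?_⟩)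
  have hcross : cross (a - p) (q - p) = 0 := by
    by_cases hqp : q = p
    · simp [hqp, cross]
    by_cases hqa : q = a
    · simp [hqa]
    have h1 := (hfirst q hq hqp hqa).cross_nonneg
    have h2 := hmax _ ⟨q, hq, rfl⟩
    rw [cross_anticomm] at h2
    linarith
  obtain ⟨t, ht⟩ :=
    exists_smul_eq_of_cross_eq_zero (fun h => hua.ne' (by rw [h, toLex_zero])) hcross
  exact ⟨t, by rw [vadd_eq_add, ← ht, sub_add_cancel]⟩

lemma toLex_sub_pos_of_forall_le (hpmin : ∀ q ∈ P, toLex p ≤ toLex q) {q : ℝ × ℝ}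
    (hq : q ∈ P.erase p) : 0 < toLex (q - p) := by
  rw [toLex_sub, sub_pos]
  exact (hpmin q (Finset.mem_of_mem_erase hq)).lt_of_ne
    fun h => Finset.ne_of_mem_erase hq (toLex.injective h).symm

theorem exists_isChain_visible (hpP : p ∈ P) (hpmin : ∀ q ∈ P, toLex p ≤ toLex q)
    (hcol : ¬Collinear ℝ (P : Set (ℝ × ℝ))) :
    ∃ L : List (ℝ × ℝ), L.Nodup ∧ (∀ x, x ∈ L ↔ x ∈ P.erase p) ∧
      (p :: L ++ [p]).IsChain (Visible P) := by
  have hpos q (hq : q ∈ P.erase p) : 0 < toLex (q - p) := toLex_sub_pos_of_forall_le hpmin hq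
  obtain ⟨L, hnd, hmem, hsorted⟩ := (P.erase p).exists_nodup_pairwise (SweepAround P p)
    (fun x hx y hy z hz => sweepLE_trans (hpos x hx) (hpos y hy) (hpos z hz))
    (fun x hx y hy => sweepLE_total (hpos x hx) (hpos y hy))
  have hmem' : ∀ x ∈ P, x ≠ p → x ∈ L := fun x hx hxp =>
    (hmem x).mpr (Finset.mem_erase.mpr ⟨hxp, hx⟩)
  obtain ⟨a, t, rfl⟩ := L.exists_cons_of_ne_nil fun hL => hcol <| by
    obtain rfl | rfl := (P.erase_eq_empty_iff p).mp (by ext x; simp [← hmem, hL])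
    · simp at hpP
    · simp [collinear_singleton]
  have ha := (hmem a).mp List.mem_cons_self
  have hfirst : ∀ z ∈ P, z ≠ p → z ≠ a → SweepAround P p a z := fun z hz hzp hza =>
    (List.pairwise_cons.mp hsorted).1 z ((List.mem_cons.mp (hmem' z hz hzp)).resolve_left hza)
  have hpa : Visible P p a :=
    visible_of_sweepAround_first (Finset.ne_of_mem_erase ha) (hpos a ha)
      (not_isMaxDir_of_sweepAround_first hcol hpP (hpos a ha) hfirst) hfirst
  have hchain : (a :: t).IsChain (Visible P) := by
    refine (hnd.and hsorted).isChain_between.imp_of_mem_imp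
      fun x y hx hy ⟨⟨hxy, hR⟩, hgap⟩ => ?_
    have hx' := (hmem x).mp hx
    have hy' := (hmem y).mp hy
    refine visible_of_sweepAround (hpos x hx') (hpos y hy') hxy hR fun z hz hzp => ?_
    exact (hgap z (hmem' z hz hzp)).imp_right (.imp_right (.imp And.right And.right))
  have hlast : Visible P ((a :: t).getLast (List.cons_ne_nil a t)) p := by
    have hz := (hmem _).mp (List.getLast_mem (List.cons_ne_nil a t))
    refine visible_of_sweepAround_last (Finset.ne_of_mem_erase hz) (hpos _ hz)
      fun q hq hqp hqz => ?_
    exact hsorted.rel_dropLast_getLast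
      (List.mem_dropLast_of_mem_of_ne_getLast (hmem' q hq hqp) hqz)
  refine ⟨a :: t, hnd, hmem, .cons_cons hpa (.append hchain (.singleton p) ?_)⟩
  intro x hx y hy
  rw [List.getLast?_eq_some_getLast (List.cons_ne_nil a t), Option.mem_some_iff] at hx
  rw [List.head?_cons, Option.mem_some_iff] at hy
  rwa [← hx, ← hy]

end SweepAround

end PointVisibility

theorem PVG.exists_isHamiltonianCycle_of_isChain {P : Finset (ℝ × ℝ)} {a : ℝ × ℝ}
    {l : List (ℝ × ℝ)} (ha : a ∈ P) (hnd : (a :: l).Nodup) (hmem : ∀ x, x ∈ a :: l ↔ x ∈ P)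
    (hlen : 2 ≤ l.length) (hchain : (a :: l ++ [a]).IsChain (Visible P)) :
    ∃ (v : {x : ℝ × ℝ // x ∈ P}) (c : (PVG P).Walk v v), c.IsHamiltonianCycle := by
  let a' : {x // x ∈ P} := ⟨a, ha⟩
  let l' := l.attachWith (· ∈ P) fun x hx => (hmem x).mp (List.mem_cons_of_mem a hx)
  have hval : (a' :: l').map Subtype.val = a :: l := by
    simp [a', l', List.attach_map_subtype_val]
  refine SimpleGraph.exists_isHamiltonianCycle_of_isChain (a := a') (l := l')
    (List.Nodup.of_map Subtype.val (hval ▸ hnd)) (fun v => ?_) (by simpa [l'] using hlen) ?_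
  · have hv : v.1 ∈ (a' :: l').map Subtype.val := hval ▸ (hmem v.1).mpr v.2
    exact (List.mem_map_of_injective Subtype.val_injective).mp hv
  · have hval' : (a' :: l' ++ [a']).map Subtype.val = a :: l ++ [a] := by
      rw [List.map_append, hval]; rfl
    exact (List.isChain_map Subtype.val).mp (hval' ▸ hchain)

theorem stmt_3 (P : Finset (ℝ × ℝ)) (hcard : 3 ≤ P.card)
    (hcol : ¬ Collinear ℝ (P : Set (ℝ × ℝ))) :
    ∃ (v : {x : ℝ × ℝ // x ∈ P}) (c : (PVG P).Walk v v), c.IsHamiltonianCycle := by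
  obtain ⟨p, hpP, hpmin⟩ := P.exists_min_image toLex (Finset.card_pos.mp (by omega))
  obtain ⟨L, hnd, hmem, hchain⟩ := PointVisibility.exists_isChain_visible hpP hpmin hcol
  have hlen : L.length = P.card - 1 := by
    rw [← Finset.card_erase_of_mem hpP, ← List.toFinset_card_of_nodup hnd]
    congr 1
    ext x
    simp [hmem]
  have hpL : p ∉ L := fun h => by simpa using (hmem p).mp h
  refine PVG.exists_isHamiltonianCycle_of_isChain hpP (List.nodup_cons.mpr ⟨hpL, hnd⟩)
    (fun x => ?_) (by omega) hchain
  by_cases hx : x = p <;> simp [hx, hmem, hpP]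
end

section
/- For every finite simple graph G there exists a finite set P of points in the plane ℝ² such that the graph Φ(G) is isomorphic to the point visibility graph of P; that is, Φ(G) is a point visibility graph. -/
/-- The blockers of `Φ(G)`: one new vertex for each unordered pair of distinct
non-adjacent vertices of `G`. -/
def Blocker {V : Type} (G : SimpleGraph V) : Type :=
  {e : Sym2 V // ¬ e.IsDiag ∧ e ∉ G.edgeSet}

/-- The transformation `Φ`: the graph on `V ⊕ B` containing all edges of `G`,
in which every blocker is adjacent to all other vertices. -/
def Phi {V : Type} (G : SimpleGraph V) : SimpleGraph (V ⊕ Blocker G) :=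
  SimpleGraph.fromRel (fun x y =>
    match x, y with
    | Sum.inl u, Sum.inl v => G.Adj u v
    | _, _ => True)

/-!
Put the vertices on the parabola `y = x²`, so that no three are collinear, and add the blockers
one at a time: each new blocker is a point of the open segment between its two endpoints that
avoids the finitely many other lines through two points already placed. Then the only collinear
triples are a blocker with its two endpoints, the blocker lying in the middle, so the only pairs
of points that cannot see each other are the pairs of non-adjacent vertices.
-/

open Function Set

section Geometry

theorem mem_affineSpan_pair_of_collinear_of_collinear {k W P : Type*} [DivisionRing k]
    [AddCommGroup W] [Module k W] [AddTorsor W P] {a b x y p q : P} (hab : a ≠ b) (hxy : x ≠ y)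
    (hx : Collinear k {a, b, x}) (hy : Collinear k {a, b, y})
    (hxpq : x ∈ line[k, p, q]) (hypq : y ∈ line[k, p, q]) : a ∈ line[k, p, q] := by
  have hxab := hx.mem_affineSpan_of_mem_of_ne (p₃ := x) (by simp) (by simp) (by simp) hab
  have hyab := hy.mem_affineSpan_of_mem_of_ne (p₃ := y) (by simp) (by simp) (by simp) hab
  have haxy : a ∈ line[k, x, y] :=
    (collinear_insert_insert_of_mem_affineSpan_pair hxab hyab).mem_affineSpan_of_mem_of_ne
      (by simp) (by simp) (by simp) hxy
  exact affineSpan_pair_le_of_mem_of_mem hxpq hypq haxy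

variable {E : Type*} [AddCommGroup E] [Module ℝ E]

theorem sbtw_iff_mem_openSegment {x y z : E} : Sbtw ℝ x y z ↔ y ∈ openSegment ℝ x z ∧ x ≠ z := by
  rw [sbtw_iff_mem_image_Ioo_and_ne, openSegment_eq_image_lineMap]

theorem exists_sbtw_forall_collinear {S : Set E} (hS : S.Finite) {p q : E} (hpq : p ≠ q) :
    ∃ x, Sbtw ℝ p x q ∧ x ∉ S ∧
      ∀ a ∈ S, ∀ b ∈ S, a ≠ b → Collinear ℝ {a, b, x} → a ∈ line[ℝ, p, q] := by
  set L : ℝ →ᵃ[ℝ] E := AffineMap.lineMap p q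
  have hL : Injective L := AffineMap.lineMap_injective ℝ hpq
  -- A line other than `line[ℝ, p, q]` meets it in at most one point.
  let bad (a b : E) : Set ℝ := {θ | a ≠ b ∧ Collinear ℝ {a, b, L θ} ∧ a ∉ line[ℝ, p, q]}
  have hbad (a b : E) : (bad a b).Subsingleton := by
    rintro θ ⟨hab, hθ, ha⟩ θ' ⟨-, hθ', -⟩
    by_contra hne
    exact ha (mem_affineSpan_pair_of_collinear_of_collinear hab (hL.ne hne) hθ hθ'
      (AffineMap.lineMap_mem_affineSpan_pair _ _ _) (AffineMap.lineMap_mem_affineSpan_pair _ _ _))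
  have hfin : (L ⁻¹' S ∪ ⋃ a ∈ S, ⋃ b ∈ S, bad a b).Finite :=
    (hS.preimage hL.injOn).union (hS.biUnion fun a _ => hS.biUnion fun b _ => (hbad a b).finite)
  obtain ⟨θ, hθ, hθbad⟩ := ((Ioo_infinite zero_lt_one).sdiff hfin).nonempty
  refine ⟨L θ, sbtw_iff_mem_image_Ioo_and_ne.2 ⟨mem_image_of_mem _ hθ, hpq⟩,
    fun h => hθbad (Or.inl h), fun a ha b hb hab hcol => ?_⟩
  by_contra h
  exact hθbad (Or.inr (mem_biUnion ha (mem_biUnion hb ⟨hab, hcol, h⟩)))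

theorem not_collinear_parabola {a b c : ℝ} (hab : a ≠ b) (hac : a ≠ c) (hbc : b ≠ c) :
    ¬Collinear ℝ {(a, a ^ 2), (b, b ^ 2), (c, c ^ 2)} := by
  intro h
  have hne : ((a, a ^ 2) : ℝ × ℝ) ≠ (b, b ^ 2) := fun h => hab (congrArg Prod.fst h)
  obtain ⟨r, hr⟩ := mem_affineSpan_pair_iff_exists_lineMap_eq.1
    (h.mem_affineSpan_of_mem_of_ne (p₃ := (c, c ^ 2)) (by simp) (by simp) (by simp) hne)
  simp only [AffineMap.lineMap_apply_module, Prod.ext_iff, Prod.fst_add, Prod.snd_add,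
    Prod.smul_fst, Prod.smul_snd, smul_eq_mul] at hr
  obtain ⟨rfl, h⟩ := hr
  have : r * (1 - r) * (a - b) ^ 2 = 0 := by linear_combination h
  rcases mul_eq_zero.1 this with h | h
  · rcases mul_eq_zero.1 h with rfl | h
    · exact hac (by ring)
    · exact hbc (by linear_combination (b - a) * h)
  · exact hab (sub_eq_zero.1 (pow_eq_zero_iff two_ne_zero |>.1 h))

end Geometry

instance {V : Type} [Finite V] (G : SimpleGraph V) : Finite (Blocker G) :=
  inferInstanceAs (Finite {e : Sym2 V // ¬ e.IsDiag ∧ e ∉ G.edgeSet})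

namespace Blocker

variable {V : Type} {G : SimpleGraph V}

def IsIncident (e : Blocker G) : V ⊕ Blocker G → Prop
  | .inl u => u ∈ e.1
  | .inr e' => e' = e

theorem ne_of_eq_mk (e : Blocker G) {u v : V} (h : e.1 = s(u, v)) : u ≠ v := by
  rintro rfl
  exact e.2.1 (h ▸ Sym2.mk_isDiag_iff.2 rfl)

theorem eq_mk_of_isIncident (e : Blocker G) {u v : V} (huv : u ≠ v)
    (hu : e.IsIncident (.inl u)) (hv : e.IsIncident (.inl v)) : e.1 = s(u, v) :=
  (Sym2.mem_and_mem_iff huv).1 ⟨hu, hv⟩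

end Blocker

open Blocker

def IsPlaced {V : Type} {G : SimpleGraph V} (D : Set (Blocker G)) : V ⊕ Blocker G → Prop
  | .inl _ => True
  | .inr e => e ∈ D

section Placement

variable {E : Type*} [AddCommGroup E] [Module ℝ E] {V : Type} {G : SimpleGraph V}

theorem isPlaced_inl {D : Set (Blocker G)} (u : V) : IsPlaced D (.inl u) := trivial

theorem isPlaced_univ (i : V ⊕ Blocker G) : IsPlaced univ i := by
  cases i <;> trivial

theorem isPlaced_insert {D : Set (Blocker G)} {e : Blocker G} {i : V ⊕ Blocker G} :
    IsPlaced (insert e D) i ↔ i = .inr e ∨ IsPlaced D i := by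
  cases i <;> simp [IsPlaced]

theorem exists_eq_inl_of_isPlaced_empty {i : V ⊕ Blocker G} (h : IsPlaced ∅ i) :
    ∃ u, i = .inl u := by
  cases i with
  | inl u => exact ⟨u, rfl⟩
  | inr e => exact h.elim

/-- The invariant of the construction: the only collinear triples of placed points are a
placed blocker together with the two endpoints of its pair. -/
structure IsBlockerPlacement (G : SimpleGraph V) (F : V ⊕ Blocker G → E) (D : Set (Blocker G)) :
    Prop where
  injOn : InjOn F {i | IsPlaced D i}
  sbtw : ∀ e ∈ D, ∀ u v, e.1 = s(u, v) → Sbtw ℝ (F (.inl u)) (F (.inr e)) (F (.inl v))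
  exists_isIncident : ∀ i j k, IsPlaced D i → IsPlaced D j → IsPlaced D k →
    i ≠ j → i ≠ k → j ≠ k → Collinear ℝ {F i, F j, F k} →
      ∃ e : Blocker G, e.IsIncident i ∧ e.IsIncident j ∧ e.IsIncident k

theorem isBlockerPlacement_empty {F : V ⊕ Blocker G → E} (hinj : Injective (F ∘ .inl))
    (hgen : ∀ u v w, u ≠ v → u ≠ w → v ≠ w → ¬Collinear ℝ {F (.inl u), F (.inl v), F (.inl w)}) :
    IsBlockerPlacement G F ∅ := by
  refine ⟨fun i hi j hj h => ?_, fun e he => he.elim, fun i j k hi hj hk hij hik hjk h => ?_⟩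
  · obtain ⟨u, rfl⟩ := exists_eq_inl_of_isPlaced_empty hi
    obtain ⟨v, rfl⟩ := exists_eq_inl_of_isPlaced_empty hj
    exact congrArg _ (hinj h)
  · obtain ⟨u, rfl⟩ := exists_eq_inl_of_isPlaced_empty hi
    obtain ⟨v, rfl⟩ := exists_eq_inl_of_isPlaced_empty hj
    obtain ⟨w, rfl⟩ := exists_eq_inl_of_isPlaced_empty hk
    exact (hgen u v w (by simpa using hij) (by simpa using hik) (by simpa using hjk) h).elim

namespace IsBlockerPlacement

variable {F : V ⊕ Blocker G → E} {D : Set (Blocker G)}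

theorem injective (hF : IsBlockerPlacement G F univ) : Injective F :=
  fun i j h => hF.injOn (isPlaced_univ i) (isPlaced_univ j) h

theorem eq_inl_of_collinear (hF : IsBlockerPlacement G F D) {e : Blocker G} (he : e ∉ D)
    {u v : V} (huv : e.1 = s(u, v)) {k : V ⊕ Blocker G} (hk : IsPlaced D k)
    (hcol : Collinear ℝ {F (.inl u), F (.inl v), F k}) : k = .inl u ∨ k = .inl v := by
  have hne := e.ne_of_eq_mk huv
  by_contra! hk'
  obtain ⟨e', hu, hv, hke'⟩ := hF.exists_isIncident _ _ _ (isPlaced_inl u) (isPlaced_inl v) hk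
    (by simpa) hk'.1.symm hk'.2.symm hcol
  have he' := e'.eq_mk_of_isIncident hne hu hv
  cases k with
  | inl w =>
    rw [IsIncident, he', Sym2.mem_iff] at hke'
    rcases hke' with rfl | rfl <;> simp at hk'
  | inr e'' =>
    obtain rfl : e'' = e' := hke'
    exact he (Subtype.ext (he'.trans huv.symm) ▸ hk)

theorem exists_insert [Finite V] (hF : IsBlockerPlacement G F D) {e : Blocker G} (he : e ∉ D) :
    ∃ F' : V ⊕ Blocker G → E, IsBlockerPlacement G F' (insert e D) := by
  classical
  obtain ⟨u, v, huv⟩ : ∃ u v, e.1 = s(u, v) := e.1.ind fun u v => ⟨u, v, rfl⟩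
  have hpq : F (.inl u) ≠ F (.inl v) := fun h => e.ne_of_eq_mk huv <|
    Sum.inl_injective (hF.injOn (isPlaced_inl (D := D) u) (isPlaced_inl (D := D) v) h)
  obtain ⟨x, hx, hxF, hxgen⟩ := exists_sbtw_forall_collinear (finite_range F) hpq
  have hline (i : V ⊕ Blocker G) (hi : IsPlaced D i) (hi' : F i ∈ line[ℝ, F (.inl u), F (.inl v)]) :
      e.IsIncident i := by
    have hcol := collinear_insert_of_mem_affineSpan_pair hi'
    rw [insert_comm, pair_comm] at hcol
    rcases hF.eq_inl_of_collinear he huv hi hcol with rfl | rfl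
    · exact (huv ▸ Sym2.mem_mk_left u v : u ∈ e.1)
    · exact (huv ▸ Sym2.mem_mk_right u v : v ∈ e.1)
  have hnew (i j : V ⊕ Blocker G) (hi : IsPlaced D i) (hj : IsPlaced D j) (hij : i ≠ j)
      (hcol : Collinear ℝ {F i, F j, x}) : e.IsIncident i ∧ e.IsIncident j := by
    have hFij : F i ≠ F j := hF.injOn.ne hi hj hij
    refine ⟨hline i hi (hxgen _ ⟨i, rfl⟩ _ ⟨j, rfl⟩ hFij hcol),
      hline j hj (hxgen _ ⟨j, rfl⟩ _ ⟨i, rfl⟩ hFij.symm ?_)⟩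
    rwa [insert_comm]
  have hold (i : V ⊕ Blocker G) (hi : IsPlaced D i) : update F (.inr e) x i = F i :=
    update_of_ne (by rintro rfl; exact he hi) _ _
  refine ⟨update F (.inr e) x, fun i hi j hj hij => ?_, fun e' he' a b hab => ?_,
    fun i j k hi hj hk hij hik hjk hcol => ?_⟩
  · rcases isPlaced_insert.1 hi with rfl | hi <;> rcases isPlaced_insert.1 hj with rfl | hj
    · rfl
    · rw [update_self, hold j hj] at hij
      exact (hxF ⟨j, hij.symm⟩).elim
    · rw [update_self, hold i hi] at hij
      exact (hxF ⟨i, hij⟩).elim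
    · rw [hold i hi, hold j hj] at hij
      exact hF.injOn hi hj hij
  · rw [hold _ (isPlaced_inl a), hold _ (isPlaced_inl b)]
    rcases he' with rfl | he'
    · rw [update_self]
      rcases Sym2.eq_iff.1 (hab.symm.trans huv) with ⟨rfl, rfl⟩ | ⟨rfl, rfl⟩
      · exact hx
      · exact hx.symm
    · rw [hold (.inr e') he']
      exact hF.sbtw e' he' a b hab
  · rcases isPlaced_insert.1 hi with rfl | hi
    · have hj := (isPlaced_insert.1 hj).resolve_left hij.symm
      have hk := (isPlaced_insert.1 hk).resolve_left hik.symm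
      rw [update_self, hold j hj, hold k hk, insert_comm, pair_comm] at hcol
      exact ⟨e, rfl, hnew j k hj hk hjk hcol⟩
    rcases isPlaced_insert.1 hj with rfl | hj
    · have hk := (isPlaced_insert.1 hk).resolve_left hjk.symm
      rw [update_self, hold i hi, hold k hk, pair_comm] at hcol
      obtain ⟨hie, hke⟩ := hnew i k hi hk hik hcol
      exact ⟨e, hie, rfl, hke⟩
    rcases isPlaced_insert.1 hk with rfl | hk
    · rw [update_self, hold i hi, hold j hj] at hcol
      obtain ⟨hie, hje⟩ := hnew i j hi hj hij hcol
      exact ⟨e, hie, hje, rfl⟩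
    rw [hold i hi, hold j hj, hold k hk] at hcol
    exact hF.exists_isIncident i j k hi hj hk hij hik hjk hcol

theorem exists_of_empty [Finite V] (hF : IsBlockerPlacement G F ∅) (D : Set (Blocker G)) :
    ∃ F' : V ⊕ Blocker G → E, IsBlockerPlacement G F' D := by
  induction D, D.toFinite using Set.Finite.induction_on with
  | empty => exact ⟨F, hF⟩
  | insert he _ ih =>
    obtain ⟨F', hF'⟩ := ih
    exact hF'.exists_insert he

theorem not_sbtw_inr_left (hF : IsBlockerPlacement G F univ) (e : Blocker G)
    (j k : V ⊕ Blocker G) : ¬Sbtw ℝ (F (.inr e)) (F k) (F j) := by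
  intro h
  have hek : .inr e ≠ k := fun h' => h.left_ne (congrArg F h')
  have hej : .inr e ≠ j := fun h' => h.left_ne_right (congrArg F h')
  have hkj : k ≠ j := fun h' => h.ne_right (congrArg F h')
  obtain ⟨e', rfl, hke, hje⟩ := hF.exists_isIncident _ _ _ (isPlaced_univ _) (isPlaced_univ _)
    (isPlaced_univ _) hek hej hkj h.wbtw.collinear
  cases k with
  | inr => exact hek (congrArg _ hke).symm
  | inl b =>
    cases j with
    | inr => exact hej (congrArg _ hje).symm
    | inl a =>
      have hba : b ≠ a := fun h' => hkj (congrArg _ h')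
      exact (hF.sbtw e (mem_univ e) b a (e.eq_mk_of_isIncident hba hke hje)).not_swap_left h.wbtw

theorem exists_sbtw_iff (hF : IsBlockerPlacement G F univ) {i j : V ⊕ Blocker G} (hij : i ≠ j) :
    (∃ k, Sbtw ℝ (F i) (F k) (F j)) ↔ ∃ u v, i = .inl u ∧ j = .inl v ∧ ¬G.Adj u v := by
  constructor
  · rintro ⟨k, hk⟩
    cases i with
    | inr e => exact (hF.not_sbtw_inr_left e j k hk).elim
    | inl u =>
      cases j with
      | inr e => exact (hF.not_sbtw_inr_left e _ k hk.symm).elim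
      | inl v =>
        refine ⟨u, v, rfl, rfl, fun hadj => ?_⟩
        obtain ⟨e, hu, hv, -⟩ := hF.exists_isIncident _ _ k (isPlaced_univ _) (isPlaced_univ _)
          (isPlaced_univ _) hij (fun h => hk.left_ne (congrArg F h))
          (fun h => hk.ne_right (congrArg F h).symm) (by rw [pair_comm]; exact hk.wbtw.collinear)
        have huv : u ≠ v := fun h => hij (congrArg _ h)
        exact e.2.2 (e.eq_mk_of_isIncident huv hu hv ▸ hadj)
  · rintro ⟨u, v, rfl, rfl, hadj⟩
    have huv : u ≠ v := fun h => hij (congrArg _ h)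
    exact ⟨.inr ⟨s(u, v), by simpa using huv, hadj⟩, hF.sbtw _ (mem_univ _) u v rfl⟩

end IsBlockerPlacement

end Placement

theorem exists_injective_forall_not_collinear (V : Type*) [Finite V] :
    ∃ f : V → ℝ × ℝ, Injective f ∧
      ∀ u v w, u ≠ v → u ≠ w → v ≠ w → ¬Collinear ℝ {f u, f v, f w} := by
  obtain ⟨n, ⟨σ⟩⟩ := Finite.exists_equiv_fin V
  have ht : Injective fun v => ((σ v : ℕ) : ℝ) :=
    Nat.cast_injective.comp (Fin.val_injective.comp σ.injective)
  refine ⟨fun v => ((σ v : ℕ), ((σ v : ℕ) : ℝ) ^ 2), fun u v h => ht (congrArg Prod.fst h),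
    fun u v w huv huw hvw => not_collinear_parabola (ht.ne huv) (ht.ne huw) (ht.ne hvw)⟩

theorem phi_adj_iff {V : Type} {G : SimpleGraph V} {i j : V ⊕ Blocker G} :
    (Phi G).Adj i j ↔ i ≠ j ∧ ¬∃ u v, i = .inl u ∧ j = .inl v ∧ ¬G.Adj u v := by
  cases i <;> cases j <;> simp [Phi, G.adj_comm]

theorem visible_univ_map_iff {α : Type*} [Fintype α] {F : α ↪ ℝ × ℝ} {i j : α} :
    Visible (Finset.univ.map F) (F i) (F j) ↔ i ≠ j ∧ ¬∃ k, Sbtw ℝ (F i) (F k) (F j) := by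
  rw [Visible, ← F.injective.ne_iff]
  refine and_congr_right fun hij => ?_
  simp [sbtw_iff_mem_openSegment, hij]

theorem nonempty_iso_pvg {α : Type*} [Fintype α] (H : SimpleGraph α) (F : α ↪ ℝ × ℝ)
    (h : ∀ i j, H.Adj i j ↔ Visible (Finset.univ.map F) (F i) (F j)) :
    Nonempty (H ≃g PVG (Finset.univ.map F)) := by
  let σ : α ≃ {x // x ∈ Finset.univ.map F} :=
    Equiv.ofBijective (fun i => ⟨F i, Finset.mem_map_of_mem F (Finset.mem_univ i)⟩)
      ⟨fun i j hij => F.injective (congrArg Subtype.val hij), fun ⟨x, hx⟩ => by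
        obtain ⟨i, -, rfl⟩ := Finset.mem_map.1 hx
        exact ⟨i, rfl⟩⟩
  exact ⟨⟨σ, (h _ _).symm⟩⟩

theorem stmt_6 {V : Type} [Fintype V] (G : SimpleGraph V) :
    ∃ P : Finset (ℝ × ℝ), Nonempty ((Phi G) ≃g PVG P) := by
  obtain ⟨f, hf, hgen⟩ := exists_injective_forall_not_collinear V
  obtain ⟨F, hF⟩ :=
    (isBlockerPlacement_empty (G := G) (F := Sum.elim f 0) hf hgen).exists_of_empty univ
  have := Fintype.ofFinite (Blocker G)
  let Fe : V ⊕ Blocker G ↪ ℝ × ℝ := ⟨F, hF.injective⟩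
  refine ⟨Finset.univ.map Fe, nonempty_iso_pvg (Phi G) Fe fun i j => ?_⟩
  rw [phi_adj_iff, visible_univ_map_iff]
  exact and_congr_right fun hij => not_congr (hF.exists_sbtw_iff hij).symm
end

section
/- Let G be a finite simple graph and let k ≥ 3. Then G contains an induced path with at least k edges if and only if Φ(G) contains an induced path with at least k edges. -/
/-- `H` contains an induced path with at least `k` edges, i.e. for some `n ≥ k`
the path graph on `n + 1` vertices (with `n` edges) embeds into `H` as an
induced subgraph. -/
def HasLongInducedPath {W : Type} (H : SimpleGraph W) (k : ℕ) : Prop :=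
  ∃ n : ℕ, k ≤ n ∧ Nonempty (SimpleGraph.pathGraph (n + 1) ↪g H)

lemma phi_adj_inl {V : Type} (G : SimpleGraph V) (u v : V) :
    (Phi G).Adj (Sum.inl u) (Sum.inl v) ↔ G.Adj u v := by
  simp only [Phi, SimpleGraph.fromRel_adj]
  constructor
  · rintro ⟨h, h' | h'⟩
    · exact h'
    · exact h'.symm
  · intro h
    exact ⟨by simp [h.ne], Or.inl h⟩

lemma phi_adj_inr {V : Type} (G : SimpleGraph V) (b : Blocker G) (x : V ⊕ Blocker G)
    (h : x ≠ Sum.inr b) : (Phi G).Adj (Sum.inr b) x := by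
  refine (SimpleGraph.fromRel_adj _ _ _).mpr ⟨fun h' => h h'.symm, Or.inl ?_⟩
  cases x <;> trivial

theorem stmt_8 {V : Type} [Fintype V] (G : SimpleGraph V) (k : ℕ) (hk : 3 ≤ k) :
    HasLongInducedPath G k ↔ HasLongInducedPath (Phi G) k := by
  constructor
  · rintro ⟨n, hn, ⟨f⟩⟩
    refine ⟨n, hn, ⟨?_⟩⟩
    exact f.trans (⟨⟨Sum.inl, fun a b h => Sum.inl.inj h⟩, phi_adj_inl G _ _⟩ :
        G ↪g Phi G)
  · rintro ⟨n, hn, ⟨f⟩⟩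
    have hn3 : 3 ≤ n := hk.trans hn
    -- every vertex of the path is an `inl`
    have hinl : ∀ i : Fin (n + 1), ∃ v : V, f i = Sum.inl v := by
      intro i
      cases hfi : f i with
      | inl v => exact ⟨v, rfl⟩
      | inr b =>
        exfalso
        -- pick j at distance 2 from i
        have hj : ∃ j : Fin (n + 1), j ≠ i ∧ ¬ (SimpleGraph.pathGraph (n + 1)).Adj i j := by
          by_cases h : i.val + 2 ≤ n
          · refine ⟨⟨i.val + 2, by omega⟩, ?_, ?_⟩
            · intro h'; have := congrArg Fin.val h'; simp at this
            · rw [SimpleGraph.pathGraph_adj]; simp; omega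
          · have h2 : 2 ≤ i.val := by omega
            refine ⟨⟨i.val - 2, by omega⟩, ?_, ?_⟩
            · intro h'; have := congrArg Fin.val h'; simp at this; omega
            · rw [SimpleGraph.pathGraph_adj]; simp; omega
        obtain ⟨j, hji, hnadj⟩ := hj
        apply hnadj
        rw [← f.map_rel_iff]
        rw [hfi]
        apply phi_adj_inr
        intro h
        exact hji (f.injective (h.trans hfi.symm))
    choose g hg using hinl
    refine ⟨n, hn, ⟨⟨⟨g, ?_⟩, ?_⟩⟩⟩
    · intro a b h
      apply f.injective
      rw [hg a, hg b, h]
    · intro a b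
      rw [← f.map_rel_iff, hg a, hg b]
      exact (phi_adj_inl G _ _).symm
end

section
/- Let t ≥ 3 and let F be a finite set of finite simple graphs such that F contains a graph isomorphic to the complete graph K_t, and such that for every H ∈ F and every set Y of at most one vertex of H, the graph H − Y contains a clique of size t − 1 (i.e., no graph in F can be made K_{t−1}-free with fewer than two vertex deletions). Let G = (V, E) be a finite simple graph, let k ∈ ℕ, and let B be the set of blockers of Φ(G). Then there exists X ⊆ V with |X| ≤ k such that G − X is F-free, if and only if there exists a set X′ of vertices of Φ(G) with |X′| ≤ k + |B| such that Φ(G) − X′ is F-free. -/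
/-!
Deleting `X` together with all blockers leaves a copy of `G - X`. Conversely, a blocker `b` is
adjacent to every vertex, so if `b` survives while a vertex `v` of `G` is deleted, we may restore
`v` and delete `b` instead: a copy of some `H ∈ F` through `v` would leave, after removing the
preimage of `v`, a `K_{t-1}` avoiding `v` and `b`, which together with `b` is a forbidden `K_t` of
the old graph. A solution deleting as few vertices of `G` as possible therefore deletes either all
blockers or no vertex of `G`, and in both cases its trace on `V` is a solution for `G`.
-/

open Set SimpleGraph

lemma Set.ncard_eq_ncard_preimage_inl_add_ncard_preimage_inr {α β : Type*} [Finite α]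
    [Finite β] (s : Set (α ⊕ β)) :
    s.ncard = (Sum.inl ⁻¹' s).ncard + (Sum.inr ⁻¹' s).ncard := by
  conv_lhs => rw [← image_preimage_inl_union_image_preimage_inr s]
  rw [ncard_union_eq disjoint_image_inl_image_inr, ncard_image_of_injective _ Sum.inl_injective,
    ncard_image_of_injective _ Sum.inr_injective]

lemma Set.ncard_image_inl_union_range_inr {α β : Type*} [Finite α] [Finite β] (s : Set α) :
    (Sum.inl '' s ∪ range (Sum.inr : β → α ⊕ β)).ncard = s.ncard + Nat.card β := by
  rw [ncard_eq_ncard_preimage_inl_add_ncard_preimage_inr]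
  simp [preimage_image_eq _ Sum.inl_injective]

namespace SimpleGraph

section IndFree

variable {U V : Type*} {ι : Type*} {W : ι → Type*} {F : ∀ i, SimpleGraph (W i)}
  {G : SimpleGraph V} {K : SimpleGraph U}

def IndFree (F : ∀ i, SimpleGraph (W i)) (K : SimpleGraph U) : Prop :=
  ∀ i, ¬ F i ⊴ K

lemma IndFree.anti {V' : Type*} {K' : SimpleGraph V'} (hK : K ⊴ K') (h : IndFree F K') :
    IndFree F K :=
  fun i hi => h i (hi.trans hK)

lemma isIndContained_induce_iff {W' : Type*} {H : SimpleGraph W'} {s : Set U} :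
    H ⊴ K.induce s ↔ ∃ f : H ↪g K, range f ⊆ s := by
  constructor
  · rintro ⟨e⟩
    exact ⟨(Embedding.induce s).comp e, by rintro _ ⟨a, rfl⟩; exact (e a).2⟩
  · rintro ⟨f, hf⟩
    exact ⟨(K.induceHomOfLE hf).comp f.isoInduceRange.toEmbedding⟩

noncomputable def Embedding.induceImage (φ : G ↪g K) (s : Set V) :
    G.induce s ≃g K.induce (φ '' s) where
  __ := Equiv.Set.image φ s φ.injective
  map_rel_iff' := by simp

lemma IndFree.cliqueFreeOn {n : ℕ} {s : Set U}
    (hKn : ∃ i, Nonempty (F i ≃g completeGraph (Fin n))) (h : IndFree F (K.induce s)) :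
    K.CliqueFreeOn s n := by
  rw [← cliqueFree_induce_iff]
  by_contra hK
  obtain ⟨i, ⟨φ⟩⟩ := hKn
  rw [not_cliqueFree_iff_top_isContained, ← top_isIndContained_iff_top_isContained] at hK
  exact h i (φ.isIndContained.trans hK)

lemma IndFree.induce_insert_diff {t : ℕ}
    (hKt : ∃ i, Nonempty (F i ≃g completeGraph (Fin (t + 1))))
    (hdel : ∀ i (Y : Set (W i)), Y.ncard ≤ 1 → ¬ ((F i).induce Yᶜ).CliqueFree t)
    {X : Set U} (h : IndFree F (K.induce Xᶜ)) {w : U} (hw : K.IsUniversal w) (hwX : w ∉ X)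
    (v : U) : IndFree F (K.induce (insert w (X \ {v}))ᶜ) := by
  classical
  intro i hi
  obtain ⟨f, hf⟩ := isIndContained_induce_iff.mp hi
  have hfX : ∀ a, f a ≠ v → f a ∉ X := fun a hav haX =>
    hf ⟨a, rfl⟩ (mem_insert_of_mem _ ⟨haX, hav⟩)
  by_cases hv : ∃ a, f a = v
  · obtain ⟨a, rfl⟩ := hv
    obtain ⟨u, hua, hu⟩ :
        ∃ u : Finset (W i), ↑u ⊆ ({a}ᶜ : Set (W i)) ∧ (F i).IsNClique t u := by
      have := hdel i {a} (ncard_singleton a).le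
      rw [cliqueFree_induce_iff] at this
      simpa [CliqueFreeOn] using this
    have hfu : ∀ x ∈ u, f x ≠ f a := fun x hx hxa => hua hx (f.injective hxa)
    have hwu : ∀ x ∈ u, f x ≠ w := fun x _ hxw =>
      hf ⟨x, rfl⟩ (by rw [hxw]; exact mem_insert w _)
    have hKu : K.IsNClique t (u.map f.toEmbedding) :=
      hu.map.mono (by rw [map_le_iff_le_comap]; exact f.comap_eq.ge)
    refine h.cliqueFreeOn hKt (t := insert w (u.map f.toEmbedding)) ?_ (hKu.insert ?_)
    · simp only [Finset.coe_insert, Finset.coe_map, insert_subset_iff, image_subset_iff]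
      exact ⟨hwX, fun x hx => hfX x (hfu x hx)⟩
    · simp only [Finset.mem_map]
      rintro _ ⟨x, hx, rfl⟩
      exact hw (hwu x hx).symm
  · push Not at hv
    exact h i (isIndContained_induce_iff.mpr ⟨f, by rintro _ ⟨a, rfl⟩; exact hfX a (hv a)⟩)

end IndFree

section Phi

variable {V : Type} {G : SimpleGraph V} {ι : Type*} {W : ι → Type*}
  {F : ∀ i, SimpleGraph (W i)}

instance [Finite V] : Finite (Blocker G) := by
  unfold Blocker; infer_instance

lemma phi_adj_inl_inl {u v : V} : (Phi G).Adj (.inl u) (.inl v) ↔ G.Adj u v := by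
  simp only [Phi, fromRel_adj, ne_eq, Sum.inl.injEq]
  exact ⟨fun ⟨_, h⟩ => h.elim id G.adj_symm, fun h => ⟨h.ne, .inl h⟩⟩

lemma isUniversal_phi_inr (b : Blocker G) : (Phi G).IsUniversal (.inr b) := by
  rintro (_ | _) h <;> exact ⟨h, .inl trivial⟩

def phiInl (G : SimpleGraph V) : G ↪g Phi G :=
  ⟨⟨Sum.inl, Sum.inl_injective⟩, phi_adj_inl_inl⟩

lemma compl_image_inl_union_range_inr (X : Set V) :
    (Sum.inl '' X ∪ range (Sum.inr : Blocker G → V ⊕ Blocker G))ᶜ = Sum.inl '' Xᶜ := by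
  ext (x | b) <;> simp

lemma IndFree.phi_induce_image_inl_union {X : Set V} (h : IndFree F (G.induce Xᶜ)) :
    IndFree F ((Phi G).induce (Sum.inl '' X ∪ range Sum.inr)ᶜ) := by
  rw [compl_image_inl_union_range_inr]
  exact h.anti ((phiInl G).induceImage Xᶜ).symm.isIndContained

lemma IndFree.induce_preimage_inl {Y : Set (V ⊕ Blocker G)}
    (h : IndFree F ((Phi G).induce Yᶜ)) : IndFree F (G.induce (Sum.inl ⁻¹' Y)ᶜ) :=
  h.anti (((phiInl G).induceImage _).isIndContained.trans
    ⟨(Phi G).induceHomOfLE (image_preimage_subset Sum.inl Yᶜ)⟩)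

theorem exists_indFree_induce_of_indFree_phi_induce [Finite V] {t : ℕ}
    (hKt : ∃ i, Nonempty (F i ≃g completeGraph (Fin (t + 1))))
    (hdel : ∀ i (Y : Set (W i)), Y.ncard ≤ 1 → ¬ ((F i).induce Yᶜ).CliqueFree t)
    {k : ℕ} {X' : Set (V ⊕ Blocker G)} (hcard : X'.ncard ≤ k + Nat.card (Blocker G))
    (hfree : IndFree F ((Phi G).induce X'ᶜ)) :
    ∃ X : Set V, X.ncard ≤ k ∧ IndFree F (G.induce Xᶜ) := by
  obtain ⟨Y, ⟨hYcard, hYfree⟩, hYmin⟩ := exists_min_image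
    {Y : Set (V ⊕ Blocker G) | Y.ncard ≤ k + Nat.card (Blocker G) ∧
      IndFree F ((Phi G).induce Yᶜ)}
    (fun Y => (Sum.inl ⁻¹' Y).ncard) (toFinite _) ⟨X', hcard, hfree⟩
  refine ⟨Sum.inl ⁻¹' Y, ?_, hYfree.induce_preimage_inl⟩
  by_cases hB : ∀ b : Blocker G, Sum.inr b ∈ Y
  · have hBY : Sum.inr ⁻¹' Y = univ := eq_univ_of_forall hB
    rw [ncard_eq_ncard_preimage_inl_add_ncard_preimage_inr, hBY, ncard_univ] at hYcard
    omega
  · push Not at hB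
    obtain ⟨b, hb⟩ := hB
    suffices Sum.inl ⁻¹' Y = ∅ by simp [this]
    by_contra hne
    obtain ⟨v, hv⟩ := nonempty_iff_ne_empty.mpr hne
    have hswap := hYmin (insert (.inr b) (Y \ {.inl v}))
      ⟨?_, hYfree.induce_insert_diff hKt hdel (isUniversal_phi_inr b) hb _⟩
    · have hpre : Sum.inl ⁻¹' insert (.inr b) (Y \ {.inl v}) = Sum.inl ⁻¹' Y \ {v} := by
        ext; simp
      rw [hpre, ncard_sdiff_singleton_of_mem hv] at hswap
      have := (ncard_pos (toFinite _)).mpr ⟨v, hv⟩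
      omega
    · rwa [ncard_insert_of_notMem (fun h => hb h.1),
        ncard_sdiff_singleton_add_one (show Sum.inl v ∈ Y from hv)]

end Phi

end SimpleGraph

theorem stmt_12_general {V ι : Type} [Fintype V]
    (t : ℕ) (ht : 3 ≤ t)
    -- the finite family `F` of finite graphs
    (nF : ι → ℕ) (F : ∀ i, SimpleGraph (Fin (nF i)))
    -- `F` contains a graph isomorphic to `K_t`
    (hKt : ∃ i, Nonempty ((F i) ≃g SimpleGraph.completeGraph (Fin t)))
    -- no graph in `F` can be made `K_{t−1}`-free with fewer than two deletions:
    -- after deleting at most one vertex, a clique of size `t − 1` remains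
    (hdel : ∀ i (Y : Set (Fin (nF i))), Y.ncard ≤ 1 →
      ¬ ((F i).induce Yᶜ).CliqueFree (t - 1))
    (G : SimpleGraph V) (k : ℕ) :
    (∃ X : Set V, X.ncard ≤ k ∧
        ∀ i, ¬ Nonempty ((F i) ↪g G.induce Xᶜ)) ↔
      (∃ X' : Set (V ⊕ Blocker G), X'.ncard ≤ k + Nat.card (Blocker G) ∧
        ∀ i, ¬ Nonempty ((F i) ↪g (Phi G).induce X'ᶜ)) := by
  obtain ⟨s, rfl⟩ : ∃ s, t = s + 1 := ⟨t - 1, by omega⟩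
  rw [Nat.add_sub_cancel] at hdel
  constructor
  · rintro ⟨X, hX, hfree⟩
    refine ⟨Sum.inl '' X ∪ range Sum.inr, ?_, IndFree.phi_induce_image_inl_union hfree⟩
    rw [ncard_image_inl_union_range_inr]
    omega
  · rintro ⟨X', hX', hfree⟩
    exact exists_indFree_induce_of_indFree_phi_induce hKt hdel hX' hfree

theorem stmt_12 {V ι : Type} [Fintype V] [Fintype ι]
    (t : ℕ) (ht : 3 ≤ t)
    -- the finite family `F` of finite graphs
    (nF : ι → ℕ) (F : ∀ i, SimpleGraph (Fin (nF i)))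
    -- `F` contains a graph isomorphic to `K_t`
    (hKt : ∃ i, Nonempty ((F i) ≃g SimpleGraph.completeGraph (Fin t)))
    -- no graph in `F` can be made `K_{t−1}`-free with fewer than two deletions:
    -- after deleting at most one vertex, a clique of size `t − 1` remains
    (hdel : ∀ i (Y : Set (Fin (nF i))), Y.ncard ≤ 1 →
      ¬ ((F i).induce Yᶜ).CliqueFree (t - 1))
    (G : SimpleGraph V) (k : ℕ) :
    (∃ X : Set V, X.ncard ≤ k ∧
        ∀ i, ¬ Nonempty ((F i) ↪g G.induce Xᶜ)) ↔
      (∃ X' : Set (V ⊕ Blocker G), X'.ncard ≤ k + Nat.card (Blocker G) ∧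
        ∀ i, ¬ Nonempty ((F i) ↪g (Phi G).induce X'ᶜ)) :=
  stmt_12_general t ht nF F hKt hdel G k
end

section
/- Let t ≥ 3, t′ ≥ 2, and let F be a finite set of finite simple graphs such that F contains a graph isomorphic to the complete graph K_t, F contains a graph isomorphic to the complete bipartite graph K_{1,t′}, and every graph in F has at least one edge. Let R ∈ ℕ be such that every finite simple graph on at least R vertices contains a clique of size t or an independent set of size t′. Let G = (V, E) be a finite simple graph, let k ∈ ℕ with |V| ≥ k + R, and let B be the set of blockers of Φ(G). Then there exists X ⊆ V with |X| ≤ k such that G − X is F-free, if and only if there exists a set X′ of vertices of Φ(G) with |X′| ≤ k + |B| such that Φ(G) − X′ is F-free. -/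
namespace SimpleGraph

variable {W : Type} {H : SimpleGraph W} {b : W}

lemma embedding_compl_apply_ne_of_forall_adj (hb : ∀ w, w ≠ b → H.Adj b w) {n : ℕ}
    (hn : 2 ≤ n) (g : completeGraph (Fin n) ↪g Hᶜ) (j : Fin n) : g j ≠ b := by
  intro hj
  obtain ⟨j', hj'⟩ := Fintype.exists_ne_of_one_lt_card (by simp; omega) j
  have hne : g j' ≠ g j := g.injective.ne hj'
  exact (g.map_adj_iff.mpr hj').2 (hj ▸ (hb (g j') (hj ▸ hne)).symm)

theorem nonempty_embedding_completeBipartiteGraph (hb : ∀ w, w ≠ b → H.Adj b w) {n : ℕ}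
    (hn : 2 ≤ n) (h : ¬ Hᶜ.CliqueFree n) :
    Nonempty (completeBipartiteGraph (Fin 1) (Fin n) ↪g H) := by
  let g := topEmbeddingOfNotCliqueFree h
  have hgb := embedding_compl_apply_ne_of_forall_adj hb hn g
  refine ⟨⟨⟨Sum.elim (fun _ => b) g, ?_⟩, ?_⟩⟩
  · rintro (x | x) (y | y) hxy
    · exact congrArg Sum.inl (Subsingleton.elim x y)
    · exact absurd hxy.symm (hgb y)
    · exact absurd hxy (hgb x)
    · exact congrArg Sum.inr (g.injective hxy)
  · intro x y
    change H.Adj (Sum.elim (fun _ => b) g x) (Sum.elim (fun _ => b) g y) ↔ _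
    rcases x with x | x <;> rcases y with y | y
    · simp
    · simpa using hb _ (hgb y)
    · simpa using (hb _ (hgb x)).symm
    · suffices ¬ H.Adj (g x) (g y) by simpa
      intro hxy
      have hne : x ≠ y := fun hxy' => hxy.ne (congrArg g hxy')
      exact (g.map_adj_iff.mpr hne).2 hxy

end SimpleGraph

namespace Phi

variable {V : Type} {G : SimpleGraph V}

instance [Finite V] : Finite (Blocker G) := by
  unfold Blocker; infer_instance

@[simp]
lemma adj_inl_inl {u v : V} : (Phi G).Adj (Sum.inl u) (Sum.inl v) ↔ G.Adj u v := by
  simp only [Phi, SimpleGraph.fromRel_adj, ne_eq, Sum.inl.injEq]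
  exact ⟨fun ⟨_, h⟩ => h.elim id G.adj_symm, fun h => ⟨h.ne, Or.inl h⟩⟩

@[simp]
lemma adj_inr {x : V ⊕ Blocker G} {b : Blocker G} : (Phi G).Adj x (Sum.inr b) ↔ x ≠ Sum.inr b := by
  cases x <;> simp [Phi]

lemma adj_inr_of_ne {x : V ⊕ Blocker G} {b : Blocker G} (h : x ≠ Sum.inr b) :
    (Phi G).Adj (Sum.inr b) x :=
  (adj_inr.mpr h).symm

variable (G) in
noncomputable def induceIso (S : Set V) : G.induce S ≃g (Phi G).induce (Sum.inl '' S) where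
  toEquiv := Equiv.Set.image Sum.inl S Sum.inl_injective
  map_rel_iff' := by
    rintro ⟨u, hu⟩ ⟨v, hv⟩
    simp [Equiv.Set.image, Equiv.Set.imageOfInjOn]

variable (G) in
def withBlockers (X : Set V) : Set (V ⊕ Blocker G) :=
  Sum.inl '' X ∪ Set.range Sum.inr

lemma compl_withBlockers (X : Set V) : (withBlockers G X)ᶜ = Sum.inl '' Xᶜ := by
  ext x
  cases x <;> simp [withBlockers]

lemma ncard_withBlockers [Finite V] (X : Set V) :
    (withBlockers G X).ncard = X.ncard + Nat.card (Blocker G) := by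
  rw [withBlockers, Set.ncard_union_eq (Set.disjoint_left.mpr (by simp)),
    Set.ncard_image_of_injective _ Sum.inl_injective,
    Set.ncard_range_of_injective Sum.inr_injective]

lemma eq_withBlockers_of_range_inr_subset {X' : Set (V ⊕ Blocker G)}
    (h : Set.range Sum.inr ⊆ X') : X' = withBlockers G (Sum.inl ⁻¹' X') := by
  ext x
  cases x with
  | inl v => simp [withBlockers]
  | inr b => simpa [withBlockers] using h (Set.mem_range_self b)

lemma range_inr_subset_of_free {ι : Type} {nF : ι → ℕ} {F : ∀ i, SimpleGraph (Fin (nF i))}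
    {t t' : ℕ} (ht' : 2 ≤ t')
    (hKt : ∃ i, Nonempty ((F i) ≃g SimpleGraph.completeGraph (Fin t)))
    (hK1t' : ∃ i, Nonempty ((F i) ≃g completeBipartiteGraph (Fin 1) (Fin t')))
    {X' : Set (V ⊕ Blocker G)}
    (hramsey : ¬ ((Phi G).induce X'ᶜ).CliqueFree t ∨ ¬ ((Phi G).induce X'ᶜ)ᶜ.CliqueFree t')
    (hfree : ∀ i, ¬ Nonempty ((F i) ↪g (Phi G).induce X'ᶜ)) :
    Set.range Sum.inr ⊆ X' := by
  rintro _ ⟨b, rfl⟩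
  by_contra hb
  rcases hramsey with hclique | hindep
  · obtain ⟨i, ⟨e⟩⟩ := hKt
    exact hfree i ⟨(SimpleGraph.topEmbeddingOfNotCliqueFree hclique).comp e.toEmbedding⟩
  · obtain ⟨i, ⟨e⟩⟩ := hK1t'
    have huniv (w : ↥X'ᶜ) (hw : w ≠ ⟨Sum.inr b, hb⟩) : ((Phi G).induce X'ᶜ).Adj ⟨_, hb⟩ w :=
      adj_inr_of_ne (Subtype.coe_ne_coe.mpr hw)
    obtain ⟨f⟩ := SimpleGraph.nonempty_embedding_completeBipartiteGraph huniv ht' hindep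
    exact hfree i ⟨f.comp e.toEmbedding⟩

end Phi

theorem stmt_13_general {V ι : Type} [Fintype V]
    (t t' : ℕ) (ht' : 2 ≤ t')
    -- the finite family `F` of finite graphs
    (nF : ι → ℕ) (F : ∀ i, SimpleGraph (Fin (nF i)))
    -- `F` contains a graph isomorphic to `K_t`
    (hKt : ∃ i, Nonempty ((F i) ≃g SimpleGraph.completeGraph (Fin t)))
    -- `F` contains a graph isomorphic to `K_{1,t'}`
    (hK1t' : ∃ i, Nonempty ((F i) ≃g completeBipartiteGraph (Fin 1) (Fin t')))
    -- Ramsey-type hypothesis: every graph on at least `R` vertices contains a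
    -- clique of size `t` or an independent set of size `t'`
    (R : ℕ)
    (hR : ∀ (W : Type) [Fintype W] (H : SimpleGraph W), R ≤ Fintype.card W →
      ¬ H.CliqueFree t ∨ ¬ (Hᶜ).CliqueFree t')
    (G : SimpleGraph V) (k : ℕ) (hcard : k + R ≤ Fintype.card V) :
    (∃ X : Set V, X.ncard ≤ k ∧
        ∀ i, ¬ Nonempty ((F i) ↪g G.induce Xᶜ)) ↔
      (∃ X' : Set (V ⊕ Blocker G), X'.ncard ≤ k + Nat.card (Blocker G) ∧
        ∀ i, ¬ Nonempty ((F i) ↪g (Phi G).induce X'ᶜ)) := by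
  constructor
  · rintro ⟨X, hX, hfree⟩
    refine ⟨Phi.withBlockers G X, by rw [Phi.ncard_withBlockers]; omega, fun i ⟨f⟩ => ?_⟩
    rw [Phi.compl_withBlockers] at f
    exact hfree i ⟨(Phi.induceIso G Xᶜ).symm.toEmbedding.comp f⟩
  · rintro ⟨X', hX', hfree⟩
    have := Fintype.ofFinite ↥X'ᶜ
    have hlarge : R ≤ Fintype.card ↥X'ᶜ := by
      have hsplit := Set.ncard_add_ncard_compl X'
      rw [Nat.card_sum, Nat.card_eq_fintype_card] at hsplit
      rw [← Nat.card_eq_fintype_card, Nat.card_coe_set_eq]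
      omega
    have hX'eq := Phi.eq_withBlockers_of_range_inr_subset
      (Phi.range_inr_subset_of_free ht' hKt hK1t' (hR _ _ hlarge) hfree)
    set X := Sum.inl ⁻¹' X'
    rw [hX'eq, Phi.ncard_withBlockers] at hX'
    rw [hX'eq, Phi.compl_withBlockers] at hfree
    exact ⟨X, by omega, fun i ⟨f⟩ => hfree i ⟨(Phi.induceIso G Xᶜ).toEmbedding.comp f⟩⟩

theorem stmt_13 {V ι : Type} [Fintype V] [Fintype ι]
    (t t' : ℕ) (ht : 3 ≤ t) (ht' : 2 ≤ t')
    -- the finite family `F` of finite graphs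
    (nF : ι → ℕ) (F : ∀ i, SimpleGraph (Fin (nF i)))
    -- `F` contains a graph isomorphic to `K_t`
    (hKt : ∃ i, Nonempty ((F i) ≃g SimpleGraph.completeGraph (Fin t)))
    -- `F` contains a graph isomorphic to `K_{1,t'}`
    (hK1t' : ∃ i, Nonempty ((F i) ≃g completeBipartiteGraph (Fin 1) (Fin t')))
    -- every graph in `F` has at least one edge
    (hedge : ∀ i, ∃ u v : Fin (nF i), (F i).Adj u v)
    -- Ramsey-type hypothesis: every graph on at least `R` vertices contains a
    -- clique of size `t` or an independent set of size `t'`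
    (R : ℕ)
    (hR : ∀ (W : Type) [Fintype W] (H : SimpleGraph W), R ≤ Fintype.card W →
      ¬ H.CliqueFree t ∨ ¬ (Hᶜ).CliqueFree t')
    (G : SimpleGraph V) (k : ℕ) (hcard : k + R ≤ Fintype.card V) :
    (∃ X : Set V, X.ncard ≤ k ∧
        ∀ i, ¬ Nonempty ((F i) ↪g G.induce Xᶜ)) ↔
      (∃ X' : Set (V ⊕ Blocker G), X'.ncard ≤ k + Nat.card (Blocker G) ∧
        ∀ i, ¬ Nonempty ((F i) ↪g (Phi G).induce X'ᶜ)) :=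
  stmt_13_general t t' ht' nF F hKt hK1t' R hR G k hcard
end

section
/- Let P be a finite set of points in the plane ℝ² that is not contained in a single line, let G be the point visibility graph of P, and let δ be the minimum vertex degree of G. Then G has a dominating set of size at most ⌊δ/2⌋ + 1. -/
/-!
Fix any vertex `u` and place it at the origin of `ℂ`. The other points lie on `n` rays from `u`, and
the point nearest to `u` on each ray is a neighbour of `u`, so `n ≤ deg u`. After a suitable rotation,
rays that are consecutive in the order of `arg` make an angle less than `π` (as `P` is not collinear),
so the open segment between two points on consecutive rays crosses no ray and they see each other.
With the rays indexed `0, …, n - 1` by increasing argument, the nearest points on the rays of a total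
dominating set of the path `0 - 1 - ⋯ - (n - 1)` with at most `n / 2 + 1` elements dominate every
point other than `u`, and `u` sees all of them.
-/

open Finset Real

namespace Real

theorem mem_Ioo_of_sin_sub_pos_of_sin_sub_neg {α β γ : ℝ} (hα : -π < α) (hβ : β ≤ π)
    (hγ : γ ∈ Set.Ioc (-π) π) (hαβ : α < β) (h1 : 0 < sin (γ - α)) (h2 : sin (γ - β) < 0) :
    γ ∈ Set.Ioo α β := by
  obtain ⟨hγ₁, hγ₂⟩ := hγ
  constructor
  · by_contra! h
    have : γ - α < -π := by
      by_contra! h'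
      exact h1.not_ge (sin_nonpos_of_nonpos_of_neg_pi_le (by linarith) h')
    have : 0 < sin (γ - β) := by
      rw [← sin_add_two_pi]
      exact sin_pos_of_pos_of_lt_pi (by linarith) (by linarith)
    linarith
  · by_contra! h
    have : π < γ - β := by
      by_contra! h'
      exact h2.not_ge (sin_nonneg_of_nonneg_of_le_pi (by linarith) h')
    have : sin (γ - α) < 0 := by
      rw [← sin_sub_two_pi]
      exact sin_neg_of_neg_of_neg_pi_lt (by linarith) (by linarith)
    linarith

end Real

namespace Complex

theorem im_exp_ofReal_mul_I_mul (θ : ℝ) (z : ℂ) :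
    (exp (θ * I) * z).im = ‖z‖ * Real.sin (θ + arg z) := by
  conv_lhs => rw [← norm_mul_exp_arg_mul_I z, mul_left_comm, ← Complex.exp_add, ← add_mul]
  rw [← ofReal_add, im_ofReal_mul, exp_ofReal_mul_I_im]

theorem arg_eq_and_norm_lt_of_mem_openSegment_zero {z w : ℂ} (hz : z ≠ 0)
    (hw : w ∈ openSegment ℝ 0 z) : w ≠ 0 ∧ arg w = arg z ∧ ‖w‖ < ‖z‖ := by
  obtain ⟨s, t, hs, ht, hst, rfl⟩ := hw
  have ht1 : t < 1 := by linarith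
  simp only [smul_zero, zero_add, real_smul]
  refine ⟨mul_ne_zero (ofReal_ne_zero.2 ht.ne') hz, arg_real_mul z ht, ?_⟩
  rw [norm_mul, norm_real, Real.norm_of_nonneg ht.le]
  exact mul_lt_of_lt_one_left (norm_pos_iff.2 hz) ht1

theorem arg_mem_Ioo_of_mem_openSegment {x y w : ℂ} (hx : x ≠ 0) (hy : y ≠ 0)
    (hxy : arg x < arg y) (hyx : arg y < arg x + π) (hw : w ∈ openSegment ℝ x y) :
    w ≠ 0 ∧ arg w ∈ Set.Ioo (arg x) (arg y) := by
  obtain ⟨s, t, hs, ht, -, rfl⟩ := hw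
  set w := s • x + t • y
  have im_rot : ∀ θ : ℝ, (exp (θ * I) * w).im
      = s * (‖x‖ * Real.sin (θ + arg x)) + t * (‖y‖ * Real.sin (θ + arg y)) := by
    intro θ
    simp only [w, real_smul, mul_add, mul_left_comm _ (s : ℂ), mul_left_comm _ (t : ℂ), add_im,
      im_ofReal_mul, im_exp_ofReal_mul_I_mul]
  have hnx := norm_pos_iff.2 hx
  have hny := norm_pos_iff.2 hy
  have hsin_yx : 0 < Real.sin (arg y - arg x) := sin_pos_of_pos_of_lt_pi (by linarith) (by linarith)
  -- Rotated by `-arg x`, the point `w` lies strictly above the real axis; rotated by `-arg y`,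
  -- strictly below it.
  have hpos : 0 < (exp ((-arg x : ℝ) * I) * w).im := by
    rw [im_rot, neg_add_cancel, Real.sin_zero, mul_zero, mul_zero, zero_add, neg_add_eq_sub]
    positivity
  have hneg : (exp ((-arg y : ℝ) * I) * w).im < 0 := by
    rw [im_rot, neg_add_cancel, Real.sin_zero, mul_zero, mul_zero, add_zero, neg_add_eq_sub,
      ← neg_sub, Real.sin_neg]
    have := mul_pos hs (mul_pos hnx hsin_yx)
    linarith
  have hw0 : w ≠ 0 := by rintro h; simp [h] at hpos
  rw [im_exp_ofReal_mul_I_mul, neg_add_eq_sub] at hpos hneg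
  exact ⟨hw0, mem_Ioo_of_sin_sub_pos_of_sin_sub_neg (neg_pi_lt_arg x) (arg_le_pi y)
    (arg_mem_Ioc w) hxy (pos_of_mul_pos_right hpos (norm_nonneg w))
    (neg_of_mul_neg_right hneg (norm_nonneg w))⟩

end Complex

open Complex

theorem Collinear.affineMap_image {k V₁ P₁ V₂ P₂ : Type*} [DivisionRing k] [AddCommGroup V₁]
    [Module k V₁] [AddTorsor V₁ P₁] [AddCommGroup V₂] [Module k V₂] [AddTorsor V₂ P₂]
    {s : Set P₁} (f : P₁ →ᵃ[k] P₂) (h : Collinear k s) : Collinear k (f '' s) := by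
  obtain ⟨p₀, v, hv⟩ := (collinear_iff_exists_forall_eq_smul_vadd s).1 h
  refine (collinear_iff_exists_forall_eq_smul_vadd _).2 ⟨f p₀, f.linear v, ?_⟩
  rintro _ ⟨p, hp, rfl⟩
  obtain ⟨r, rfl⟩ := hv p hp
  exact ⟨r, by simp [AffineMap.map_vadd]⟩

theorem AffineEquiv.collinear_image_iff {k V₁ P₁ V₂ P₂ : Type*} [DivisionRing k] [AddCommGroup V₁]
    [Module k V₁] [AddTorsor V₁ P₁] [AddCommGroup V₂] [Module k V₂] [AddTorsor V₂ P₂]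
    (e : P₁ ≃ᵃ[k] P₂) (s : Set P₁) : Collinear k (e '' s) ↔ Collinear k s := by
  refine ⟨fun h => ?_, Collinear.affineMap_image e.toAffineMap⟩
  simpa [Set.image_image] using h.affineMap_image e.symm.toAffineMap

theorem collinear_of_forall_eq_smul {k V : Type*} [DivisionRing k] [AddCommGroup V] [Module k V]
    {S : Set V} (v : V) (h : ∀ z ∈ S, ∃ r : k, z = r • v) : Collinear k S :=
  (collinear_iff_exists_forall_eq_smul_vadd S).2 ⟨0, v, by simpa using h⟩

noncomputable def directions (S : Finset ℂ) : Finset ℝ := (S.erase 0).image arg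

theorem mem_directions {S : Finset ℂ} {a : ℝ} : a ∈ directions S ↔ ∃ z ∈ S, z ≠ 0 ∧ arg z = a := by
  simp only [directions, mem_image, mem_erase]
  grind

def ConsecutiveGapsLT (A : Finset ℝ) (c : ℝ) : Prop :=
  ∀ a ∈ A, ∀ b ∈ A, a < b → (∀ x ∈ A, x ∉ Set.Ioo a b) → b - a < c

theorem two_le_card_directions {S : Finset ℂ} (hS : ¬ Collinear ℝ (S : Set ℂ)) :
    2 ≤ #(directions S) := by
  by_contra! h
  obtain ⟨a, ha⟩ := card_le_one_iff_subset_singleton.1 (Nat.le_of_lt_succ h)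
  refine hS (collinear_of_forall_eq_smul (exp (a * I)) fun z hz => ?_)
  by_cases hz0 : z = 0
  · exact ⟨0, by simp [hz0]⟩
  · have : arg z = a := mem_singleton.1 (ha (mem_directions.2 ⟨z, hz, hz0, rfl⟩))
    exact ⟨‖z‖, by rw [← this, real_smul, norm_mul_exp_arg_mul_I]⟩

theorem consecutiveGapsLT_pi_of_forall_im_nonneg {S : Finset ℂ} (hS : ¬ Collinear ℝ (S : Set ℂ))
    (him : ∀ z ∈ S, 0 ≤ z.im) : ConsecutiveGapsLT (directions S) π := by
  intro a ha b hb hab hgap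
  by_contra! hπ
  obtain ⟨x, hx, -, rfl⟩ := mem_directions.1 ha
  obtain ⟨y, -, -, rfl⟩ := mem_directions.1 hb
  have hx0 : 0 ≤ arg x := arg_nonneg_iff.2 (him x hx)
  -- The gap can only run from `0` to `π`, so no point of `S` lies strictly above the real axis.
  refine hS (collinear_of_forall_eq_smul 1 fun z hz => ⟨z.re, Complex.ext (by simp) ?_⟩)
  by_contra him0
  have harg0 : 0 < arg z :=
    (arg_nonneg_iff.2 (him z hz)).lt_of_ne fun h => him0 (by simp [(arg_eq_zero_iff.1 h.symm).2])
  have hargπ : arg z < π := arg_lt_pi_iff.2 (Or.inr fun h => him0 (by simp [h]))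
  exact hgap _ (mem_directions.2 ⟨z, hz, fun h => him0 (by simp [h]), rfl⟩)
    ⟨by linarith [arg_le_pi y], by linarith⟩

theorem consecutiveGapsLT_pi_of_forall_exists_im_neg {S : Finset ℂ}
    (h : ∀ ζ : Circle, ∃ z ∈ S, (ζ * z).im < 0) : ConsecutiveGapsLT (directions S) π := by
  intro a ha b hb hab hgap
  by_contra! hπ
  -- Rotating the direction `b` onto the positive real axis puts all of `S` in the upper half-plane.
  obtain ⟨z, hz, hneg⟩ := h (Circle.exp (-b))
  rw [Circle.coe_exp, im_exp_ofReal_mul_I_mul] at hneg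
  have hz0 : z ≠ 0 := by rintro rfl; simp at hneg
  refine hneg.not_ge (mul_nonneg (norm_nonneg z) ?_)
  obtain ⟨y, -, -, rfl⟩ := mem_directions.1 hb
  obtain ⟨x, -, -, rfl⟩ := mem_directions.1 ha
  rcases le_or_gt (arg z) (arg x) with hza | hza
  · rw [← Real.sin_add_two_pi]
    exact sin_nonneg_of_nonneg_of_le_pi (by linarith [neg_pi_lt_arg z, arg_le_pi y])
      (by linarith)
  · have : arg y ≤ arg z := by
      by_contra! h
      exact hgap _ (mem_directions.2 ⟨z, hz, hz0, rfl⟩) ⟨hza, h⟩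
    exact sin_nonneg_of_nonneg_of_le_pi (by linarith) (by linarith [arg_le_pi z, neg_pi_lt_arg x])

theorem exists_rotation_consecutiveGapsLT_pi {S : Finset ℂ} (hS : ¬ Collinear ℝ (S : Set ℂ)) :
    ∃ ζ : Circle, ConsecutiveGapsLT (directions (S.image (rotation ζ))) π := by
  by_cases hhalf : ∃ ζ : Circle, ∀ z ∈ S, 0 ≤ (ζ * z).im
  · obtain ⟨ζ, hζ⟩ := hhalf
    refine ⟨ζ, consecutiveGapsLT_pi_of_forall_im_nonneg ?_ (by simpa using hζ)⟩
    rwa [coe_image, ← (rotation ζ).coe_toLinearEquiv, ← LinearEquiv.coe_toAffineEquiv,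
      AffineEquiv.collinear_image_iff]
  · push Not at hhalf
    exact ⟨1, by simpa using consecutiveGapsLT_pi_of_forall_exists_im_neg hhalf⟩

theorem exists_affineEquiv_consecutiveGapsLT_pi {P : Finset (ℝ × ℝ)}
    (hP : ¬ Collinear ℝ (P : Set (ℝ × ℝ))) (u : ℝ × ℝ) :
    ∃ e : (ℝ × ℝ) ≃ᵃ[ℝ] ℂ, e u = 0 ∧ 2 ≤ #(directions (P.image e)) ∧
      ConsecutiveGapsLT (directions (P.image e)) π := by
  have hcol (f : (ℝ × ℝ) ≃ᵃ[ℝ] ℂ) : ¬ Collinear ℝ (P.image f : Set ℂ) := by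
    rwa [coe_image, f.collinear_image_iff]
  let e₀ : (ℝ × ℝ) ≃ᵃ[ℝ] ℂ :=
    (AffineEquiv.vaddConst ℝ u).symm.trans equivRealProdLm.symm.toAffineEquiv
  obtain ⟨ζ, hζ⟩ := exists_rotation_consecutiveGapsLT_pi (hcol e₀)
  let e := e₀.trans (rotation ζ).toLinearEquiv.toAffineEquiv
  have himage : P.image e = (P.image e₀).image (rotation ζ) := by
    rw [image_image]
    rfl
  exact ⟨e, by simp [e, e₀], two_le_card_directions (hcol e), himage ▸ hζ⟩

namespace Finset

variable {α : Type*} [LinearOrder α] (A : Finset α)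

theorem strictMonoOn_card_filter_lt : StrictMonoOn (fun a => #{x ∈ A | x < a}) A := by
  intro a ha b _ hab
  refine card_lt_card ((ssubset_iff_of_subset fun x hx => ?_).2 ⟨a, ?_, ?_⟩)
  · simp only [mem_filter] at hx ⊢
    exact ⟨hx.1, hx.2.trans hab⟩
  · exact mem_filter.2 ⟨ha, hab⟩
  · simp

theorem card_filter_lt_lt_card {a : α} (ha : a ∈ A) : #{x ∈ A | x < a} < #A :=
  card_lt_card (filter_ssubset.2 ⟨a, ha, lt_irrefl a⟩)

theorem exists_card_filter_lt_eq {i : ℕ} (hi : i < #A) : ∃ a ∈ A, #{x ∈ A | x < a} = i := by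
  have himage : A.image (fun a => #{x ∈ A | x < a}) = range #A := by
    refine eq_of_subset_of_card_le (fun _ h => ?_) ?_
    · obtain ⟨a, ha, rfl⟩ := mem_image.1 h
      exact mem_range.2 (card_filter_lt_lt_card A ha)
    · rw [card_range, card_image_of_injOn (strictMonoOn_card_filter_lt A).injOn]
  rw [← mem_range, ← himage, mem_image] at hi
  exact hi

end Finset

theorem card_filter_range_mod_four (n : ℕ) :
    #{i ∈ range n | i % 4 = 1 ∨ i % 4 = 2} = (n + 2) / 4 + (n + 1) / 4 := by
  induction n with
  | zero => simp
  | succ n ih =>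
    rw [range_add_one, filter_insert]
    split_ifs with h
    · rw [card_insert_of_notMem (by simp), ih]
      omega
    · rw [ih]
      omega

theorem exists_total_dominating_path {n : ℕ} (hn : 2 ≤ n) :
    ∃ I : Finset ℕ, I ⊆ range n ∧ #I ≤ n / 2 + 1 ∧ ∀ j < n, ∃ i ∈ I, i + 1 = j ∨ j + 1 = i := by
  set F := {i ∈ range n | i % 4 = 1 ∨ i % 4 = 2}
  refine ⟨insert (n - 2) F, ?_, ?_, fun j hj => ?_⟩
  · exact insert_subset (mem_range.2 (by omega)) (filter_subset _ _)
  · have hF : #F = _ := card_filter_range_mod_four n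
    by_cases h3 : n % 4 = 3
    · rw [insert_eq_of_mem (by simp [F]; omega)]
      omega
    · have := card_insert_le (n - 2) F
      omega
  · have : j = n - 1 ∨ j % 4 ≤ 1 ∧ j + 1 < n ∨ 2 ≤ j % 4 := by omega
    rcases this with h | h | h
    · exact ⟨n - 2, mem_insert_self _ _, by omega⟩
    · exact ⟨j + 1, mem_insert_of_mem (by simp [F]; omega), by omega⟩
    · exact ⟨j - 1, mem_insert_of_mem (by simp [F]; omega), by omega⟩

theorem SimpleGraph.exists_dominating_of_path_labelling {V : Type*} [Finite V] (G : SimpleGraph V)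
    (u : V) {n : ℕ} (hn : 2 ≤ n) (dir : V → ℕ) (hdir : ∀ v ≠ u, dir v < n)
    (hnbr : ∀ i < n, ∃ v, G.Adj u v ∧ dir v = i)
    (hadj : ∀ v w, v ≠ u → w ≠ u → dir v + 1 = dir w → G.Adj v w) :
    ∃ D : Set V, D.ncard ≤ (G.neighborSet u).ncard / 2 + 1 ∧ ∀ v, v ∈ D ∨ ∃ w ∈ D, G.Adj w v := by
  have : Nonempty V := ⟨u⟩
  choose! pick hpick using hnbr
  obtain ⟨I, hIn, hIcard, hIdom⟩ := exists_total_dominating_path hn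
  have hn_le : n ≤ (G.neighborSet u).ncard := by
    have := Set.ncard_le_ncard_of_injOn pick (s := (range n : Set ℕ)) (t := G.neighborSet u)
      (fun i hi => (hpick i (mem_range.1 hi)).1)
      (fun i hi j hj h => by rw [← (hpick i (mem_range.1 hi)).2, ← (hpick j (mem_range.1 hj)).2, h])
    simpa using this
  refine ⟨pick '' I, ?_, fun v => Or.inr ?_⟩
  · calc (pick '' I).ncard ≤ (I : Set ℕ).ncard := Set.ncard_image_le I.finite_toSet
      _ = #I := Set.ncard_coe_finset I
      _ ≤ n / 2 + 1 := hIcard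
      _ ≤ (G.neighborSet u).ncard / 2 + 1 := by gcongr
  by_cases hvu : v = u
  · obtain ⟨i, hi, -⟩ := hIdom 0 (by omega)
    exact ⟨pick i, ⟨i, hi, rfl⟩, hvu ▸ (hpick i (mem_range.1 (hIn hi))).1.symm⟩
  · obtain ⟨i, hi, hij⟩ := hIdom (dir v) (hdir v hvu)
    obtain ⟨hui, hdiri⟩ := hpick i (mem_range.1 (hIn hi))
    refine ⟨pick i, ⟨i, hi, rfl⟩, ?_⟩
    rcases hij with h | h
    · exact hadj _ _ hui.ne' hvu (by rw [hdiri, h])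
    · exact (hadj _ _ hvu hui.ne' (by rw [hdiri, h])).symm

theorem visible_iff_affineEquiv {E : Type*} [AddCommGroup E] [Module ℝ E]
    (e : (ℝ × ℝ) ≃ᵃ[ℝ] E) {P : Finset (ℝ × ℝ)} {p q : ℝ × ℝ} :
    Visible P p q ↔ e p ≠ e q ∧ ∀ r ∈ P, e r ∉ openSegment ℝ (e p) (e q) := by
  have hseg (r : ℝ × ℝ) : r ∈ openSegment ℝ p q ↔ e r ∈ openSegment ℝ (e p) (e q) := by
    rw [← e.coe_toAffineMap, ← image_openSegment, e.coe_toAffineMap, e.injective.mem_set_image]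
  simp only [Visible, hseg, e.injective.ne_iff]

section Rays

variable {P : Finset (ℝ × ℝ)} (e : (ℝ × ℝ) ≃ᵃ[ℝ] ℂ)

theorem visible_of_forall_norm_le {u p : ℝ × ℝ} (heu : e u = 0) (hp : e p ≠ 0)
    (hmin : ∀ r ∈ P, e r ≠ 0 → arg (e r) = arg (e p) → ‖e p‖ ≤ ‖e r‖) : Visible P u p := by
  rw [visible_iff_affineEquiv e, heu]
  refine ⟨hp.symm, fun r hr hseg => ?_⟩
  obtain ⟨hr0, harg, hlt⟩ := arg_eq_and_norm_lt_of_mem_openSegment_zero hp hseg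
  exact (hmin r hr hr0 harg).not_gt hlt

theorem visible_of_consecutive_directions (hgap : ConsecutiveGapsLT (directions (P.image e)) π)
    {p q : ℝ × ℝ} (hp : p ∈ P) (hq : q ∈ P) (hp0 : e p ≠ 0) (hq0 : e q ≠ 0)
    (hpq : arg (e p) < arg (e q))
    (hempty : ∀ c ∈ directions (P.image e), c ∉ Set.Ioo (arg (e p)) (arg (e q))) :
    Visible P p q := by
  have hqp : arg (e q) < arg (e p) + π := by
    have := hgap _ (mem_directions.2 ⟨e p, mem_image_of_mem e hp, hp0, rfl⟩)
      _ (mem_directions.2 ⟨e q, mem_image_of_mem e hq, hq0, rfl⟩) hpq hempty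
    linarith
  rw [visible_iff_affineEquiv e]
  refine ⟨fun h => hpq.ne (by rw [h]), fun r hr hseg => ?_⟩
  obtain ⟨hr0, hmem⟩ := arg_mem_Ioo_of_mem_openSegment hp0 hq0 hpq hqp hseg
  exact hempty _ (mem_directions.2 ⟨e r, mem_image_of_mem e hr, hr0, rfl⟩) hmem

theorem exists_ray_labelling (u : {x // x ∈ P}) (heu : e u = 0)
    (hgap : ConsecutiveGapsLT (directions (P.image e)) π) :
    ∃ dir : {x // x ∈ P} → ℕ, (∀ v ≠ u, dir v < #(directions (P.image e))) ∧
      (∀ i < #(directions (P.image e)), ∃ v, (PVG P).Adj u v ∧ dir v = i) ∧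
      ∀ v w, v ≠ u → w ≠ u → dir v + 1 = dir w → (PVG P).Adj v w := by
  set A := directions (P.image e)
  have he0 (v : {x // x ∈ P}) (hv : v ≠ u) : e v ≠ 0 :=
    fun h => hv (Subtype.ext (e.injective (h.trans heu.symm)))
  have hmem (v : {x // x ∈ P}) (hv : v ≠ u) : arg (e v) ∈ A :=
    mem_directions.2 ⟨e v, mem_image_of_mem e v.2, he0 v hv, rfl⟩
  refine ⟨fun v => #{a ∈ A | a < arg (e v)}, fun v hv => A.card_filter_lt_lt_card (hmem v hv),
    fun i hi => ?_, fun v w hv hw hvw => ?_⟩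
  · obtain ⟨a, ha, rfl⟩ := A.exists_card_filter_lt_eq hi
    have hray : {p ∈ P | e p ≠ 0 ∧ arg (e p) = a}.Nonempty := by
      obtain ⟨z, hz, hz0, rfl⟩ := mem_directions.1 ha
      obtain ⟨p, hp, rfl⟩ := mem_image.1 hz
      exact ⟨p, mem_filter.2 ⟨hp, hz0, rfl⟩⟩
    obtain ⟨p, hp, hmin⟩ := exists_min_image _ (fun p => ‖e p‖) hray
    simp only [mem_filter] at hp hmin
    obtain ⟨hpP, hp0, rfl⟩ := hp
    refine ⟨⟨p, hpP⟩, visible_of_forall_norm_le e heu hp0 fun r hr hr0 harg => ?_, rfl⟩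
    exact hmin r ⟨hr, hr0, harg⟩
  · beta_reduce at hvw
    have hmono := A.strictMonoOn_card_filter_lt
    refine visible_of_consecutive_directions e hgap v.2 w.2 (he0 v hv) (he0 w hw)
      ((hmono.lt_iff_lt (hmem v hv) (hmem w hw)).1 (by omega)) fun c hc hcI => ?_
    have h1 := hmono (hmem v hv) hc hcI.1
    have h2 := hmono hc (hmem w hw) hcI.2
    simp only at h1 h2
    omega

end Rays

theorem stmt_14 (P : Finset (ℝ × ℝ)) (hcol : ¬ Collinear ℝ (P : Set (ℝ × ℝ)))
    (δ : ℕ)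
    (hδ : IsLeast {d : ℕ | ∃ v : {x : ℝ × ℝ // x ∈ P}, d = ((PVG P).neighborSet v).ncard} δ) :
    ∃ D : Set {x : ℝ × ℝ // x ∈ P}, D.ncard ≤ δ / 2 + 1 ∧
      ∀ v, v ∈ D ∨ ∃ u ∈ D, (PVG P).Adj u v := by
  obtain ⟨u, rfl⟩ := hδ.1
  obtain ⟨e, heu, hcard, hgap⟩ := exists_affineEquiv_consecutiveGapsLT_pi hcol u.1
  obtain ⟨dir, hdir, hnbr, hadj⟩ := exists_ray_labelling e u heu hgap
  exact (PVG P).exists_dominating_of_path_labelling u hcard dir hdir hnbr hadj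
end
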